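/- arXiv:2605.10519 — 7 statements merged into one kernel-verified Lean document; each statement's English description precedes it below -/
import Mathlib

section
/- Let m, n ≥ 1 be integers, M = m + n, T ≥ 1, and η > 0. For each t ∈ {1,…,T} let u_t ∈ [-1,1]^M be such that there exist numbers h_{t,j} ∈ [0,1] with u_{t,m+j} = h_{t,j} − β_j for every j ∈ {1,…,n}, where β ∈ (0,1]^n and β_min = min_{j∈[n]} β_j. Let λ_1 = 0 ∈ ℝ^M and define λ_{t+1,i} = max(0, λ_{t,i} + η·u_{t,i}) for every coordinate i. Let τ ∈ {1,…,T} be such that either τ = T, or there exists k ∈ {1,…,n} with ∑_{t=1}^{τ} h_{t,k} ≥ β_k·T − 1. Then −∑_{t=1}^{τ} ⟨λ_t, u_t⟩ ≤ −(T − τ) + 1/β_min + 1/(2η·β_min²) + (η/2)·T·M. -/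
open Finset

lemma tele_sum (f : ℕ → ℝ) (b : ℕ) :
    ∑ t ∈ Finset.Icc 1 b, (f t - f (t + 1)) = f 1 - f (b + 1) := by
  induction b with
  | zero => simp
  | succ b ih =>
    rw [Finset.sum_Icc_succ_top (by omega : 1 ≤ b + 1), ih]
    ring

lemma ogd_regret (M T τ : ℕ) (hτT : τ ≤ T) (η : ℝ) (hη : 0 < η)
    (u lam : ℕ → Fin M → ℝ)
    (hlam1 : ∀ i, lam 1 i = 0)
    (hupd : ∀ t ∈ Finset.Icc 1 T, ∀ i, lam (t + 1) i = max 0 (lam t i + η * u t i))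
    (ls : Fin M → ℝ) (hls : ∀ i, 0 ≤ ls i) :
    ∑ t ∈ Finset.Icc 1 τ, ∑ i, (ls i - lam t i) * u t i ≤
      (∑ i, (ls i) ^ 2) / (2 * η) + (η / 2) * ∑ t ∈ Finset.Icc 1 τ, ∑ i, (u t i) ^ 2 := by
  set Φ : ℕ → ℝ := fun t => ∑ i, (lam t i - ls i) ^ 2 with hΦ
  have key : ∀ t ∈ Finset.Icc 1 τ,
      2 * η * ∑ i, (ls i - lam t i) * u t i ≤ Φ t - Φ (t + 1) + η ^ 2 * ∑ i, (u t i) ^ 2 := by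
    intro t ht
    have htT : t ∈ Finset.Icc 1 T := by
      simp only [Finset.mem_Icc] at ht ⊢; omega
    have step : ∀ i : Fin M, 2 * η * ((ls i - lam t i) * u t i) ≤
        (lam t i - ls i) ^ 2 - (lam (t + 1) i - ls i) ^ 2 + η ^ 2 * (u t i) ^ 2 := by
      intro i
      have h1 := hupd t htT i
      have hproj : (lam (t + 1) i - ls i) ^ 2 ≤ (lam t i + η * u t i - ls i) ^ 2 := by
        rw [h1]
        rcases le_or_gt 0 (lam t i + η * u t i) with h2 | h2
        · rw [max_eq_right h2]
        · rw [max_eq_left h2.le]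
          nlinarith [hls i]
      nlinarith
    calc 2 * η * ∑ i, (ls i - lam t i) * u t i
        = ∑ i, 2 * η * ((ls i - lam t i) * u t i) := by rw [Finset.mul_sum]
      _ ≤ ∑ i, ((lam t i - ls i) ^ 2 - (lam (t + 1) i - ls i) ^ 2 + η ^ 2 * (u t i) ^ 2) :=
          Finset.sum_le_sum (fun i _ => step i)
      _ = Φ t - Φ (t + 1) + η ^ 2 * ∑ i, (u t i) ^ 2 := by
          simp [hΦ, Finset.sum_add_distrib, Finset.sum_sub_distrib, Finset.mul_sum]
  have hsum : 2 * η * ∑ t ∈ Finset.Icc 1 τ, ∑ i, (ls i - lam t i) * u t i ≤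
      Φ 1 - Φ (τ + 1) + η ^ 2 * ∑ t ∈ Finset.Icc 1 τ, ∑ i, (u t i) ^ 2 := by
    rw [Finset.mul_sum]
    calc ∑ t ∈ Finset.Icc 1 τ, 2 * η * ∑ i, (ls i - lam t i) * u t i
        ≤ ∑ t ∈ Finset.Icc 1 τ, (Φ t - Φ (t + 1) + η ^ 2 * ∑ i, (u t i) ^ 2) :=
          Finset.sum_le_sum key
      _ = (Φ 1 - Φ (τ + 1)) + η ^ 2 * ∑ t ∈ Finset.Icc 1 τ, ∑ i, (u t i) ^ 2 := by
          rw [Finset.sum_add_distrib, tele_sum Φ τ, Finset.mul_sum]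
  have hΦ1 : Φ 1 = ∑ i, (ls i) ^ 2 := by
    simp [hΦ, hlam1]
  have hΦτ : 0 ≤ Φ (τ + 1) := Finset.sum_nonneg (fun i _ => sq_nonneg _)
  rw [hΦ1] at hsum
  have h2η : (0 : ℝ) < 2 * η := by linarith
  have heq : (∑ i, (ls i) ^ 2) / (2 * η) + (η / 2) * ∑ t ∈ Finset.Icc 1 τ, ∑ i, (u t i) ^ 2
      = ((∑ i, (ls i) ^ 2) + η ^ 2 * ∑ t ∈ Finset.Icc 1 τ, ∑ i, (u t i) ^ 2) / (2 * η) := by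
    field_simp
  rw [heq, le_div_iff₀ h2η]
  nlinarith [hsum, hΦτ]

/-- Bound on the cumulative dual penalty up to the stopping time
(Lemma `r_d` in the paper). -/
theorem dual_penalty_bound
    (m n : ℕ) (hm : 1 ≤ m) (hn : 1 ≤ n) (T : ℕ) (hT : 1 ≤ T)
    (η : ℝ) (hη : 0 < η)
    (u : ℕ → Fin (m + n) → ℝ)
    (hu : ∀ t ∈ Finset.Icc 1 T, ∀ i, u t i ∈ Set.Icc (-1 : ℝ) 1)
    (β : Fin n → ℝ) (hβ : ∀ j, β j ∈ Set.Ioc (0 : ℝ) 1)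
    (βmin : ℝ) (hβmin : IsLeast (Set.range β) βmin)
    (h : ℕ → Fin n → ℝ)
    (hh : ∀ t ∈ Finset.Icc 1 T, ∀ j, h t j ∈ Set.Icc (0 : ℝ) 1)
    (huh : ∀ t ∈ Finset.Icc 1 T, ∀ j : Fin n, u t (Fin.natAdd m j) = h t j - β j)
    (lam : ℕ → Fin (m + n) → ℝ)
    (hlam1 : ∀ i, lam 1 i = 0)
    (hupd : ∀ t ∈ Finset.Icc 1 T, ∀ i, lam (t + 1) i = max 0 (lam t i + η * u t i))
    (τ : ℕ) (hτ : τ ∈ Finset.Icc 1 T)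
    (hstop : τ = T ∨ ∃ k : Fin n, β k * T - 1 ≤ ∑ t ∈ Finset.Icc 1 τ, h t k) :
    -∑ t ∈ Finset.Icc 1 τ, ∑ i, lam t i * u t i ≤
      -((T : ℝ) - τ) + 1 / βmin + 1 / (2 * η * βmin ^ 2)
        + (η / 2) * T * (m + n) := by
  obtain ⟨hτ1, hτT⟩ := Finset.mem_Icc.mp hτ
  obtain ⟨⟨j0, hj0⟩, hβminle⟩ := hβmin
  have hβminpos : 0 < βmin := hj0 ▸ (hβ j0).1
  -- bound on the squared norms of the u's
  have husq : ∑ t ∈ Finset.Icc 1 τ, ∑ i, (u t i) ^ 2 ≤ (T : ℝ) * (m + n) := by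
    calc ∑ t ∈ Finset.Icc 1 τ, ∑ i, (u t i) ^ 2
        ≤ ∑ t ∈ Finset.Icc 1 τ, ∑ _i : Fin (m + n), (1 : ℝ) := by
          refine Finset.sum_le_sum fun t ht => Finset.sum_le_sum fun i _ => ?_
          have hti : t ∈ Finset.Icc 1 T := by
            simp only [Finset.mem_Icc] at ht ⊢; omega
          obtain ⟨h1, h2⟩ := hu t hti i
          nlinarith
      _ = (τ : ℝ) * (m + n) := by
          simp [Nat.card_Icc]
          ring
      _ ≤ (T : ℝ) * (m + n) := by
          have : (τ : ℝ) ≤ (T : ℝ) := by exact_mod_cast hτT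
          have hMn : (0 : ℝ) ≤ (m : ℝ) + n := by positivity
          nlinarith
  have hdecomp : ∀ ls : Fin (m + n) → ℝ,
      -∑ t ∈ Finset.Icc 1 τ, ∑ i, lam t i * u t i =
        (∑ t ∈ Finset.Icc 1 τ, ∑ i, (ls i - lam t i) * u t i)
          - ∑ t ∈ Finset.Icc 1 τ, ∑ i, ls i * u t i := by
    intro ls
    have : ∀ t ∈ Finset.Icc 1 τ, ∑ i, (ls i - lam t i) * u t i
        = (∑ i, ls i * u t i) - ∑ i, lam t i * u t i := by
      intro t _
      rw [← Finset.sum_sub_distrib]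
      exact Finset.sum_congr rfl fun i _ => by ring
    rw [Finset.sum_congr rfl this, Finset.sum_sub_distrib]
    ring
  rcases hstop with hstop | ⟨k, hk⟩
  · -- τ = T : use comparator 0
    have hd := hdecomp (fun _ => 0)
    rw [hd]
    have hbound := ogd_regret (m + n) T τ hτT η hη u lam hlam1 hupd
      (fun _ => 0) (fun _ => le_refl 0)
    have hz : (∑ i : Fin (m + n), ((fun _ => (0:ℝ)) i) ^ 2) = 0 := by simp
    rw [hz, zero_div] at hbound
    have hzero : ∑ t ∈ Finset.Icc 1 τ, ∑ i, (fun _ => (0:ℝ)) i * u t i = 0 := by simp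
    rw [hzero]
    have h1 : (0 : ℝ) < 1 / βmin := by positivity
    have h2 : (0 : ℝ) < 1 / (2 * η * βmin ^ 2) := by positivity
    have h3 : (η / 2) * ∑ t ∈ Finset.Icc 1 τ, ∑ i, (u t i) ^ 2 ≤ (η / 2) * T * (m + n) := by
      rw [mul_assoc]
      exact mul_le_mul_of_nonneg_left husq (by linarith)
    have hτeq : (τ : ℝ) = (T : ℝ) := by rw [hstop]
    linarith
  · -- stopping case : comparator (1/β k) on coordinate m+k
    have hβk : 0 < β k := (hβ k).1
    have hβmk : βmin ≤ β k := hβminle ⟨k, rfl⟩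
    set c : Fin (m + n) := Fin.natAdd m k with hc
    set ls : Fin (m + n) → ℝ := fun i => if i = c then 1 / β k else 0 with hls
    have hlsnn : ∀ i, 0 ≤ ls i := by
      intro i; simp only [hls]
      split <;> positivity
    have hlssum : ∀ t, ∑ i, ls i * u t i = (1 / β k) * u t c := by
      intro t
      rw [Finset.sum_eq_single c]
      · simp [hls]
      · intro i _ hi; simp [hls, hi]
      · simp
    have hlssq : ∑ i, (ls i) ^ 2 = (1 / β k) ^ 2 := by
      rw [Finset.sum_eq_single c]
      · simp [hls]
      · intro i _ hi; simp [hls, hi]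
      · simp
    have hcomp : (T : ℝ) - τ - 1 / β k ≤ ∑ t ∈ Finset.Icc 1 τ, ∑ i, ls i * u t i := by
      have huc : ∀ t ∈ Finset.Icc 1 τ, u t c = h t k - β k := by
        intro t ht
        have hti : t ∈ Finset.Icc 1 T := by
          simp only [Finset.mem_Icc] at ht ⊢; omega
        exact huh t hti k
      have hsum2 : ∑ t ∈ Finset.Icc 1 τ, ∑ i, ls i * u t i
          = (1 / β k) * (∑ t ∈ Finset.Icc 1 τ, h t k - β k * τ) := by
        calc ∑ t ∈ Finset.Icc 1 τ, ∑ i, ls i * u t i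
            = ∑ t ∈ Finset.Icc 1 τ, (1 / β k) * (h t k - β k) :=
              Finset.sum_congr rfl (fun t ht => by rw [hlssum t, huc t ht])
          _ = (1 / β k) * ∑ t ∈ Finset.Icc 1 τ, (h t k - β k) := by
              rw [Finset.mul_sum]
          _ = (1 / β k) * (∑ t ∈ Finset.Icc 1 τ, h t k - β k * τ) := by
              rw [Finset.sum_sub_distrib, Finset.sum_const, Nat.card_Icc]
              simp only [Nat.add_sub_cancel, nsmul_eq_mul]
              ring
      have hge : β k * T - 1 - β k * τ ≤ ∑ t ∈ Finset.Icc 1 τ, h t k - β k * τ := by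
        linarith
      have hmul := mul_le_mul_of_nonneg_left hge
        (le_of_lt (by positivity : (0:ℝ) < 1 / β k))
      have heq : (1 / β k) * (β k * T - 1 - β k * τ) = (T : ℝ) - τ - 1 / β k := by
        field_simp
        ring
      rw [hsum2]
      linarith [heq ▸ hmul]
    have hr := ogd_regret (m + n) T τ hτT η hη u lam hlam1 hupd ls hlsnn
    rw [hlssq] at hr
    have hd := hdecomp ls
    -- bound the comparator terms
    have hb1 : 1 / β k ≤ 1 / βmin := one_div_le_one_div_of_le hβminpos hβmk
    have hb2 : (1 / β k) ^ 2 / (2 * η) ≤ 1 / (2 * η * βmin ^ 2) := by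
      rw [div_le_div_iff₀ (by positivity) (by positivity)]
      have : βmin ^ 2 ≤ (β k) ^ 2 := by nlinarith
      rw [div_pow, one_pow]
      rw [div_mul_eq_mul_div, div_le_iff₀ (by positivity)]
      nlinarith
    have h3 : (η / 2) * ∑ t ∈ Finset.Icc 1 τ, ∑ i, (u t i) ^ 2 ≤ (η / 2) * T * (m + n) := by
      rw [mul_assoc]
      exact mul_le_mul_of_nonneg_left husq (by linarith)
    rw [hd]
    linarith
end

section
/- Let M ≥ 1 and T ≥ 1 be integers, ρ ∈ (0,1], and η > 0 with η ≤ 1/√T and η·M ≤ 1/ρ. Set c1 = 2 and c2 = 14·M. Let u_1, …, u_T ∈ [-1,1]^M and let (λ_t)_t be OGD dual iterates: λ_{t+1,i} = max(0, λ_{t,i} + η·u_{t,i}) for every coordinate i, with λ_1 ≥ 0 componentwise. Suppose 1 ≤ t1 ≤ t2 ≤ T are such that ‖λ_t‖₁ ∈ [c1/ρ, c2/ρ] for all t ∈ [t1, t2], ‖λ_{t2}‖₁ ≥ c2/ρ, and ‖λ_{t1}‖₁ ≤ c1/ρ + M·η. Then ∑_{t=t1}^{t2} ⟨λ_t, u_t⟩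 ≥ M/(2·ρ²·η). -/
open Finset

set_option maxHeartbeats 1000000 in
/-- Lower bound on the cumulative dual penalty over an interval on which the
ℓ1 norm of the multipliers climbs from `c1/ρ` to `c2/ρ`, with `c1 = 2`,
`c2 = 14 M` (Lemma `b4` in the paper). -/
theorem dual_penalty_lower_bound_climb
    (M T : ℕ) (hM : 1 ≤ M) (hT : 1 ≤ T)
    (ρ η : ℝ) (hρ : ρ ∈ Set.Ioc (0 : ℝ) 1)
    (hη0 : 0 < η) (hη1 : η ≤ 1 / Real.sqrt T) (hη2 : η * M ≤ 1 / ρ)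
    (u : ℕ → Fin M → ℝ)
    (hu : ∀ t ∈ Finset.Icc 1 T, ∀ i, u t i ∈ Set.Icc (-1 : ℝ) 1)
    (lam : ℕ → Fin M → ℝ)
    (hlam1 : ∀ i, 0 ≤ lam 1 i)
    (hupd : ∀ t ∈ Finset.Icc 1 T, ∀ i, lam (t + 1) i = max 0 (lam t i + η * u t i))
    (t1 t2 : ℕ) (ht1 : 1 ≤ t1) (ht12 : t1 ≤ t2) (ht2 : t2 ≤ T)
    (hmid : ∀ t ∈ Finset.Icc t1 t2,
      (∑ i, |lam t i|) ∈ Set.Icc (2 / ρ) (14 * M / ρ))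
    (hend : 14 * M / ρ ≤ ∑ i, |lam t2 i|)
    (hstart : (∑ i, |lam t1 i|) ≤ 2 / ρ + M * η) :
    ∑ t ∈ Finset.Icc t1 t2, ∑ i, lam t i * u t i ≥ M / (2 * ρ ^ 2 * η) := by
  obtain ⟨hρ0, hρ1⟩ := hρ
  have hM' : (1 : ℝ) ≤ M := by exact_mod_cast hM
  have hT' : (1 : ℝ) ≤ T := by exact_mod_cast hT
  have hsT : (1 : ℝ) ≤ Real.sqrt T := Real.one_le_sqrt.mpr hT'
  have hη1' : η ≤ 1 := le_trans hη1 (by rw [div_le_one (by linarith)]; exact hsT)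
  -- η^2 * T ≤ 1
  have hηT : η ^ 2 * T ≤ 1 := by
    have h1 : η * Real.sqrt T ≤ 1 := by
      rw [← le_div_iff₀ (by positivity)]; exact hη1
    have h2 : Real.sqrt T * Real.sqrt T = T := Real.mul_self_sqrt (by positivity)
    nlinarith [mul_le_mul h1 h1 (by positivity) (by positivity)]
  set S : ℕ → ℝ := fun t => ∑ i, (lam t i) ^ 2 with hS
  set L : ℕ → ℝ := fun t => ∑ i, |lam t i| with hL
  -- per-step inequality
  have hstep : ∀ t ∈ Finset.Icc 1 T,
      S (t + 1) ≤ S t + 2 * η * (∑ i, lam t i * u t i) + η ^ 2 * M := by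
    intro t ht
    have h1 : S (t + 1) ≤ ∑ i, ((lam t i) ^ 2 + 2 * η * (lam t i * u t i) + η ^ 2) := by
      apply Finset.sum_le_sum
      intro i _
      rw [hupd t ht i]
      obtain ⟨hu1, hu2⟩ := hu t ht i
      have h2 : (max 0 (lam t i + η * u t i)) ^ 2 ≤ (lam t i + η * u t i) ^ 2 := by
        rcases le_or_gt 0 (lam t i + η * u t i) with h | h
        · rw [max_eq_right h]
        · rw [max_eq_left h.le]
          simpa using sq_nonneg (lam t i + η * u t i)
      have hu3 : (u t i) ^ 2 ≤ 1 := by nlinarith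
      nlinarith [sq_nonneg η]
    calc S (t + 1) ≤ _ := h1
      _ = S t + 2 * η * (∑ i, lam t i * u t i) + η ^ 2 * M := by
        simp only [hS]
        rw [Finset.sum_add_distrib, Finset.sum_add_distrib, ← Finset.mul_sum,
          Finset.sum_const, Finset.card_univ, Fintype.card_fin, nsmul_eq_mul]
        ring
  -- telescoping
  have htel : ∀ k, t1 ≤ k → k ≤ t2 →
      S k ≤ S t1 + 2 * η * (∑ t ∈ Finset.Ico t1 k, ∑ i, lam t i * u t i)
        + η ^ 2 * M * ((k - t1 : ℕ) : ℝ) := by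
    intro k hk
    induction k, hk using Nat.le_induction with
    | base => intro _; simp
    | succ k hk ih =>
      intro hk2
      have ihh := ih (by omega)
      have hst := hstep k (by simp; omega)
      rw [Finset.sum_Ico_succ_top hk]
      have hc : ((k + 1 - t1 : ℕ) : ℝ) = ((k - t1 : ℕ) : ℝ) + 1 := by
        have : k + 1 - t1 = (k - t1) + 1 := by omega
        rw [this]; push_cast; ring
      rw [hc]
      nlinarith [ihh]
  have hA := htel t2 ht12 le_rfl
  set A : ℝ := ∑ t ∈ Finset.Ico t1 t2, ∑ i, lam t i * u t i with hAdef
  set B : ℝ := ∑ i, lam t2 i * u t2 i with hBdef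
  -- split the sum
  have hsplit : ∑ t ∈ Finset.Icc t1 t2, ∑ i, lam t i * u t i = A + B := by
    rw [show Finset.Icc t1 t2 = Finset.Ico t1 (t2 + 1) by rw [Finset.Ico_add_one_right_eq_Icc],
      Finset.sum_Ico_succ_top (by omega)]
  -- Cauchy-Schwarz facts
  have hCS2 : L t2 ^ 2 ≤ M * S t2 := by
    have := sq_sum_le_card_mul_sum_sq (s := (Finset.univ : Finset (Fin M)))
      (f := fun i => |lam t2 i|)
    simpa [hL, hS, Finset.card_univ, sq_abs] using this
  have hCS1 : S t1 ≤ L t1 ^ 2 := by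
    have := Finset.sum_sq_le_sq_sum_of_nonneg (s := (Finset.univ : Finset (Fin M)))
      (f := fun i => |lam t1 i|) (fun i _ => abs_nonneg _)
    simpa [hL, hS, sq_abs] using this
  have hL2u : L t2 ≤ 14 * M / ρ := (hmid t2 (by simp [ht12])).2
  have hL2l : 14 * M ≤ L t2 * ρ := (div_le_iff₀ hρ0).mp hend
  have hL1 : L t1 * ρ ≤ 3 := by
    have h3 : L t1 ≤ 3 / ρ := by
      have : M * η ≤ 1 / ρ := by linarith [hη2]
      calc L t1 ≤ 2 / ρ + M * η := hstart
        _ ≤ 2 / ρ + 1 / ρ := by linarith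
        _ = 3 / ρ := by ring
    calc L t1 * ρ ≤ (3 / ρ) * ρ := mul_le_mul_of_nonneg_right h3 hρ0.le
      _ = 3 := by field_simp
  have hL1n : 0 ≤ L t1 := Finset.sum_nonneg fun i _ => abs_nonneg _
  -- key derived bounds
  have hS2 : 196 * M ≤ ρ ^ 2 * S t2 := by
    have h1 : (14 * M) ^ 2 ≤ (L t2 * ρ) ^ 2 := by
      nlinarith [hL2l, hM', hρ0]
    nlinarith [hCS2, hM', sq_nonneg ρ]
  have hρsq : ρ ^ 2 ≤ 1 := by nlinarith
  have hS1 : ρ ^ 2 * S t1 ≤ 9 := by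
    have e2 : (L t1 * ρ) ^ 2 ≤ 9 := by nlinarith [mul_nonneg hL1n hρ0.le]
    calc ρ ^ 2 * S t1 ≤ ρ ^ 2 * L t1 ^ 2 := mul_le_mul_of_nonneg_left hCS1 (sq_nonneg ρ)
      _ = (L t1 * ρ) ^ 2 := by ring
      _ ≤ 9 := e2
  have hd : η ^ 2 * M * ((t2 - t1 : ℕ) : ℝ) ≤ M := by
    have hdT : ((t2 - t1 : ℕ) : ℝ) ≤ T := by
      have : t2 - t1 ≤ T := by omega
      exact_mod_cast this
    have hdn : (0 : ℝ) ≤ ((t2 - t1 : ℕ) : ℝ) := Nat.cast_nonneg _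
    have e1 : η ^ 2 * ((t2 - t1 : ℕ) : ℝ) ≤ η ^ 2 * T :=
      mul_le_mul_of_nonneg_left hdT (sq_nonneg η)
    have e2 : η ^ 2 * ((t2 - t1 : ℕ) : ℝ) ≤ 1 := by linarith
    calc η ^ 2 * (M : ℝ) * ((t2 - t1 : ℕ) : ℝ) = (M : ℝ) * (η ^ 2 * ((t2 - t1 : ℕ) : ℝ)) := by
          ring
      _ ≤ (M : ℝ) * 1 := mul_le_mul_of_nonneg_left e2 (by positivity)
      _ = (M : ℝ) := mul_one _
  have hB : -(14 * M / ρ) ≤ B := by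
    have h1 : ∀ i, -|lam t2 i| ≤ lam t2 i * u t2 i := by
      intro i
      obtain ⟨hu1, hu2⟩ := hu t2 (by simp; omega) i
      rcases le_or_gt 0 (lam t2 i) with h | h
      · calc -|lam t2 i| = -(lam t2 i) := by rw [abs_of_nonneg h]
          _ ≤ lam t2 i * u t2 i := by nlinarith
      · calc -|lam t2 i| = lam t2 i := by rw [abs_of_neg h]; ring
          _ ≤ lam t2 i * u t2 i := by nlinarith
    calc -(14 * M / ρ) ≤ -L t2 := by linarith
      _ = ∑ i, -|lam t2 i| := by rw [hL]; rw [← Finset.sum_neg_distrib]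
      _ ≤ B := Finset.sum_le_sum fun i _ => h1 i
  have hBρ : -(28 * M) ≤ 2 * η * ρ ^ 2 * B := by
    have hρne : ρ ≠ 0 := ne_of_gt hρ0
    have h1 : 2 * η * ρ ^ 2 * (-(14 * M / ρ)) ≤ 2 * η * ρ ^ 2 * B :=
      mul_le_mul_of_nonneg_left hB (by positivity)
    have h2 : 2 * η * ρ ^ 2 * (-(14 * (M : ℝ) / ρ)) = -(28 * M * (η * ρ)) := by
      field_simp; ring
    have h3 : η * ρ ≤ 1 := by nlinarith
    have h4 : 28 * (M : ℝ) * (η * ρ) ≤ 28 * M := by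
      have := mul_le_mul_of_nonneg_left h3 (by positivity : (0 : ℝ) ≤ 28 * (M : ℝ))
      linarith [this]
    calc -(28 * (M : ℝ)) ≤ -(28 * M * (η * ρ)) := by linarith
      _ = 2 * η * ρ ^ 2 * (-(14 * (M : ℝ) / ρ)) := h2.symm
      _ ≤ 2 * η * ρ ^ 2 * B := h1
  -- combine
  have hAρ : 195 * M - 9 ≤ 2 * η * ρ ^ 2 * A := by
    have h1 : ρ ^ 2 * S t2 ≤ ρ ^ 2 * S t1 + 2 * η * ρ ^ 2 * A
        + ρ ^ 2 * (η ^ 2 * M * ((t2 - t1 : ℕ) : ℝ)) := by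
      have := mul_le_mul_of_nonneg_left hA (sq_nonneg ρ)
      linarith [this]
    have h2 : ρ ^ 2 * (η ^ 2 * M * ((t2 - t1 : ℕ) : ℝ)) ≤ M := by
      have hn : 0 ≤ η ^ 2 * M * ((t2 - t1 : ℕ) : ℝ) := by positivity
      calc ρ ^ 2 * (η ^ 2 * M * ((t2 - t1 : ℕ) : ℝ))
          ≤ 1 * (η ^ 2 * M * ((t2 - t1 : ℕ) : ℝ)) := mul_le_mul_of_nonneg_right hρsq hn
        _ = η ^ 2 * M * ((t2 - t1 : ℕ) : ℝ) := one_mul _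
        _ ≤ M := hd
    linarith [hS2, hS1]
  rw [hsplit, ge_iff_le, div_le_iff₀ (by positivity)]
  have hfin : (A + B) * (2 * ρ ^ 2 * η) = 2 * η * ρ ^ 2 * A + 2 * η * ρ ^ 2 * B := by ring
  rw [hfin]
  linarith [hAρ, hBρ, hM']
end

section
/- Let m, n ≥ 1 be integers, M = m + n, T ≥ 1, ρ ∈ (0,1], and η > 0 with η ≤ 1/√T and η·M ≤ 1/ρ. Let 𝒳 be a nonempty set, and for each t ∈ {1,…,T} let f_t : 𝒳 → [0,1] and g̃_t : 𝒳 → [-1,1]^M. Suppose there exists a sequence x°_1, …, x°_T ∈ 𝒳 with g̃_{t,i}(x°_t) ≤ −ρ for every t and every coordinate i (pointwise strict feasibility with margin ρ, as in the adversarial Slater condition). Let λ_1 = 0 ∈ ℝ^M, let x_1,…,x_T ∈ 𝒳, and define λ_{t+1,i} = max(0, λ_{t,i} + η·g̃_{t,i}(x_t)) for every coordinate i. Assume there is τ ∈ {1,…,T} such that for every t ≤ τ the action x_t maximizes the Lagrangian, i.e., f_t(x_t) − ⟨λ_t, g̃_t(x_t)⟩ ≥ f_t(x) − ⟨λ_t,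 g̃_t(x)⟩ for all x ∈ 𝒳, while for every t > τ one has g̃_{t,i}(x_t) ≤ 0 for all coordinates i (as when the void action is played). Then ‖λ_t‖₁ ≤ 14·M/ρ for every t ∈ {1,…,T+1}. -/
open Finset

set_option maxHeartbeats 1600000 in
/-- Boundedness of the Lagrangian multipliers in the adversarial setting
(Lemma `selfb` in the paper, adversarial case). -/
theorem multipliers_bounded_adversarial
    (m n : ℕ) (hm : 1 ≤ m) (hn : 1 ≤ n) (T : ℕ) (hT : 1 ≤ T)
    (ρ η : ℝ) (hρ : ρ ∈ Set.Ioc (0 : ℝ) 1)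
    (hη0 : 0 < η) (hη1 : η ≤ 1 / Real.sqrt T) (hη2 : η * (m + n) ≤ 1 / ρ)
    {𝒳 : Type*} [Nonempty 𝒳]
    (f : ℕ → 𝒳 → ℝ) (g : ℕ → 𝒳 → Fin (m + n) → ℝ)
    (hf : ∀ t ∈ Finset.Icc 1 T, ∀ x, f t x ∈ Set.Icc (0 : ℝ) 1)
    (hg : ∀ t ∈ Finset.Icc 1 T, ∀ x i, g t x i ∈ Set.Icc (-1 : ℝ) 1)
    (x0 : ℕ → 𝒳)
    (hx0 : ∀ t ∈ Finset.Icc 1 T, ∀ i, g t (x0 t) i ≤ -ρ)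
    (lam : ℕ → Fin (m + n) → ℝ) (hlam1 : ∀ i, lam 1 i = 0)
    (x : ℕ → 𝒳)
    (hupd : ∀ t ∈ Finset.Icc 1 T, ∀ i,
      lam (t + 1) i = max 0 (lam t i + η * g t (x t) i))
    (τ : ℕ) (hτ : τ ∈ Finset.Icc 1 T)
    (hgreedy : ∀ t ∈ Finset.Icc 1 τ, ∀ y : 𝒳,
      f t y - ∑ i, lam t i * g t y i ≤ f t (x t) - ∑ i, lam t i * g t (x t) i)
    (hvoid : ∀ t ∈ Finset.Icc 1 T, τ < t → ∀ i, g t (x t) i ≤ 0) :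
    ∀ t ∈ Finset.Icc 1 (T + 1), (∑ i, |lam t i|) ≤ 14 * (m + n) / ρ := by
  obtain ⟨hρ0, hρ1⟩ := hρ
  obtain ⟨hτ1, hτT⟩ := Finset.mem_Icc.mp hτ
  have hM2 : (2 : ℝ) ≤ ((m : ℝ) + n) := by
    have h : (2 : ℕ) ≤ m + n := by omega
    have h2 := (Nat.cast_le (α := ℝ)).mpr h
    push_cast at h2
    linarith
  have hM0 : (0 : ℝ) < ((m : ℝ) + n) := by linarith
  have hT0 : (0 : ℝ) < (T : ℝ) := by exact_mod_cast Nat.lt_of_lt_of_le Nat.zero_lt_one hT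
  have hsqrtT : (1 : ℝ) ≤ Real.sqrt T := by
    rw [show (1:ℝ) = Real.sqrt 1 by simp]
    exact Real.sqrt_le_sqrt (by exact_mod_cast hT)
  have hη_le_one : η ≤ 1 := le_trans hη1 (by
    rw [div_le_one (by linarith)]; exact hsqrtT)
  have hη2T : η ^ 2 * T ≤ 1 := by
    have h1 : η ^ 2 ≤ (1 / Real.sqrt T) ^ 2 := pow_le_pow_left₀ (le_of_lt hη0) hη1 2
    have h2 : (1 / Real.sqrt T) ^ 2 = 1 / T := by
      rw [div_pow, one_pow, Real.sq_sqrt (le_of_lt hT0)]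
    rw [h2] at h1
    calc η ^ 2 * T ≤ (1 / T) * T := mul_le_mul_of_nonneg_right h1 (le_of_lt hT0)
      _ = 1 := by field_simp
  -- nonnegativity of the multipliers
  have hnn : ∀ t, 1 ≤ t → t ≤ T + 1 → ∀ i, 0 ≤ lam t i := by
    intro t ht1
    induction t, ht1 using Nat.le_induction with
    | base => intro _ i; rw [hlam1 i]
    | succ t ht ih =>
      intro hle i
      rw [hupd t (Finset.mem_Icc.mpr ⟨ht, by omega⟩) i]
      exact le_max_left 0 _
  -- abbreviations (made opaque so linear arithmetic treats them as atoms)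
  set Mr : ℝ := ((m : ℝ) + n) with hMr
  set S : ℕ → ℝ := fun t => ∑ i, (lam t i) ^ 2 with hSdef
  set N : ℕ → ℝ := fun t => ∑ i, lam t i with hNdef
  have hMr' : Mr = ((m : ℝ) + n) := hMr
  have hSdef' : ∀ t, S t = ∑ i, (lam t i) ^ 2 := fun t => by rw [hSdef]
  have hNdef' : ∀ t, N t = ∑ i, lam t i := fun t => by rw [hNdef]
  clear_value Mr S N
  clear hMr hSdef hNdef
  have hNnn : ∀ t, 1 ≤ t → t ≤ T + 1 → 0 ≤ N t := by
    intro t ht1 ht2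
    rw [hNdef']
    exact Finset.sum_nonneg fun i _ => hnn t ht1 ht2 i
  -- S t ≤ (N t)^2 for nonnegative vectors
  have hSN : ∀ t, 1 ≤ t → t ≤ T + 1 → S t ≤ (N t) ^ 2 := by
    intro t ht1 ht2
    rw [hSdef']
    have h1 : ∀ i ∈ Finset.univ (α := Fin (m + n)), (lam t i) ^ 2 ≤ lam t i * N t := by
      intro i _
      have hle : lam t i ≤ N t := by
        rw [hNdef']
        exact Finset.single_le_sum (fun j _ => hnn t ht1 ht2 j) (Finset.mem_univ i)
      have h2 := mul_le_mul_of_nonneg_left hle (hnn t ht1 ht2 i)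
      nlinarith
    calc (∑ i, (lam t i) ^ 2) ≤ ∑ i, lam t i * N t := Finset.sum_le_sum h1
      _ = (∑ i, lam t i) * N t := by rw [← Finset.sum_mul]
      _ = (N t) ^ 2 := by rw [← hNdef']; ring
  -- greedy drift: for 1 ≤ t ≤ τ
  have hdrift : ∀ t, 1 ≤ t → t ≤ τ →
      S (t + 1) ≤ S t + 2 * η * (1 - ρ * N t) + η ^ 2 * Mr := by
    intro t ht1 htτ
    have htT : t ≤ T := le_trans htτ hτT
    have htIcc : t ∈ Finset.Icc 1 T := Finset.mem_Icc.mpr ⟨ht1, htT⟩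
    -- inner product bound
    have hA : ∑ i, lam t i * g t (x t) i ≤ 1 - ρ * N t := by
      have hgr := hgreedy t (Finset.mem_Icc.mpr ⟨ht1, htτ⟩) (x0 t)
      have hfx : f t (x t) ≤ 1 := (hf t htIcc (x t)).2
      have hf0 : 0 ≤ f t (x0 t) := (hf t htIcc (x0 t)).1
      have hB : ∑ i, lam t i * g t (x0 t) i ≤ -(ρ * N t) := by
        calc ∑ i, lam t i * g t (x0 t) i ≤ ∑ i, lam t i * (-ρ) := by
              apply Finset.sum_le_sum
              intro i _
              exact mul_le_mul_of_nonneg_left (hx0 t htIcc i) (hnn t ht1 (by omega) i)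
          _ = (∑ i, lam t i) * (-ρ) := by rw [← Finset.sum_mul]
          _ = -(ρ * N t) := by rw [← hNdef']; ring
      linarith
    -- per-coordinate squared bound
    have h1 : ∀ i ∈ Finset.univ (α := Fin (m + n)),
        (lam (t + 1) i) ^ 2 ≤ (lam t i + η * g t (x t) i) ^ 2 := by
      intro i _
      rw [hupd t htIcc i]
      rcases le_or_gt 0 (lam t i + η * g t (x t) i) with h | h
      · rw [max_eq_right h]
      · rw [max_eq_left (le_of_lt h)]
        simpa using sq_nonneg (lam t i + η * g t (x t) i)
    have h2 : ∑ i, (g t (x t) i) ^ 2 ≤ Mr := by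
      have h3 : ∀ i ∈ Finset.univ (α := Fin (m + n)), (g t (x t) i) ^ 2 ≤ 1 := by
        intro i _
        have h4 := (hg t htIcc (x t) i).1
        have h5 := (hg t htIcc (x t) i).2
        nlinarith
      calc ∑ i, (g t (x t) i) ^ 2 ≤ ∑ _i : Fin (m + n), (1 : ℝ) :=
            Finset.sum_le_sum h3
        _ = Mr := by
            rw [Finset.sum_const, Finset.card_univ, Fintype.card_fin,
              nsmul_eq_mul, mul_one, hMr']
            push_cast
            ring
    calc S (t + 1) ≤ ∑ i, (lam t i + η * g t (x t) i) ^ 2 := by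
          rw [hSdef']; exact Finset.sum_le_sum h1
      _ = S t + 2 * η * (∑ i, lam t i * g t (x t) i)
            + η ^ 2 * (∑ i, (g t (x t) i) ^ 2) := by
          rw [hSdef', Finset.mul_sum, Finset.mul_sum, ← Finset.sum_add_distrib,
            ← Finset.sum_add_distrib]
          apply Finset.sum_congr rfl
          intro i _
          ring
      _ ≤ S t + 2 * η * (1 - ρ * N t) + η ^ 2 * Mr := by
          have e1 : 2 * η * (∑ i, lam t i * g t (x t) i) ≤ 2 * η * (1 - ρ * N t) :=
            mul_le_mul_of_nonneg_left hA (by linarith)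
          have e2 : η ^ 2 * (∑ i, (g t (x t) i) ^ 2) ≤ η ^ 2 * Mr :=
            mul_le_mul_of_nonneg_left h2 (by positivity)
          linarith
  -- void steps: coordinates do not increase
  have hvoidS : ∀ t, 1 ≤ t → t ≤ T → τ < t → S (t + 1) ≤ S t := by
    intro t ht1 htT htτ
    have htIcc : t ∈ Finset.Icc 1 T := Finset.mem_Icc.mpr ⟨ht1, htT⟩
    rw [hSdef', hSdef']
    apply Finset.sum_le_sum
    intro i _
    have hle : lam (t + 1) i ≤ lam t i := by
      rw [hupd t htIcc i]
      apply max_le (hnn t ht1 (by omega) i)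
      have hg0 := hvoid t htIcc htτ i
      nlinarith
    have hnn' : 0 ≤ lam (t + 1) i := hnn (t + 1) (by omega) (by omega) i
    exact pow_le_pow_left₀ hnn' hle 2
  -- main invariant
  have key : ∀ t, 1 ≤ t → t ≤ T + 1 →
      S t + ((T + 1 - t : ℕ) : ℝ) * (η ^ 2 * Mr) ≤ 1 / ρ ^ 2 + Mr + 2 := by
    intro t ht1
    induction t, ht1 using Nat.le_induction with
    | base =>
      intro _
      have hS1 : S 1 = 0 := by
        rw [hSdef']
        apply Finset.sum_eq_zero
        intro i _
        rw [hlam1 i]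
        ring
      have hcast : ((T + 1 - 1 : ℕ) : ℝ) = (T : ℝ) := by norm_num
      rw [hS1, hcast]
      have hTb : (T : ℝ) * (η ^ 2 * Mr) ≤ Mr := by
        calc (T : ℝ) * (η ^ 2 * Mr) = (η ^ 2 * T) * Mr := by ring
          _ ≤ 1 * Mr := mul_le_mul_of_nonneg_right hη2T (le_of_lt hM0)
          _ = Mr := by ring
      have h0 : 0 < 1 / ρ ^ 2 := by positivity
      linarith
    | succ t ht ih =>
      intro hle
      have htT : t ≤ T := by omega
      have hcast : ((T + 1 - t : ℕ) : ℝ) = ((T + 1 - (t + 1) : ℕ) : ℝ) + 1 := by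
        have h1 : T + 1 - t = (T + 1 - (t + 1)) + 1 := by omega
        rw [h1]; push_cast; ring
      have ihh := ih (by omega)
      rw [hcast] at ihh
      have hNt : 0 ≤ N t := hNnn t ht (by omega)
      have hterm : 0 ≤ η ^ 2 * Mr := by positivity
      rcases le_or_gt t τ with hcase | hcase
      · -- greedy step
        have hd := hdrift t ht hcase
        rcases le_or_gt 1 (ρ * N t) with hbig | hsmall
        · -- decreasing step
          have h5 : 2 * η * (1 - ρ * N t) ≤ 0 := by nlinarith
          linarith
        · -- small multipliers
          have hSt : S t ≤ 1 / ρ ^ 2 := by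
            have h1 : S t ≤ (N t) ^ 2 := hSN t ht (by omega)
            have h2 : N t < 1 / ρ := by
              rw [lt_div_iff₀ hρ0]; linarith [mul_comm ρ (N t)]
            have h3 : (N t) ^ 2 ≤ (1 / ρ) ^ 2 := pow_le_pow_left₀ hNt (le_of_lt h2) 2
            have h4 : (1 / ρ) ^ 2 = 1 / ρ ^ 2 := by rw [div_pow, one_pow]
            rw [h4] at h3
            linarith
          have htail : (((T + 1 - (t + 1) : ℕ) : ℝ) + 1) * (η ^ 2 * Mr) ≤ Mr := by
            have hc : ((T + 1 - (t + 1) : ℕ) : ℝ) + 1 ≤ (T : ℝ) := by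
              have h6 : (T + 1 - (t + 1)) + 1 ≤ T := by omega
              exact_mod_cast h6
            have h7 : (((T + 1 - (t + 1) : ℕ) : ℝ) + 1) * (η ^ 2 * Mr)
                ≤ (T : ℝ) * (η ^ 2 * Mr) := mul_le_mul_of_nonneg_right hc hterm
            have h8 : (T : ℝ) * (η ^ 2 * Mr) ≤ Mr := by
              calc (T : ℝ) * (η ^ 2 * Mr) = (η ^ 2 * T) * Mr := by ring
                _ ≤ 1 * Mr := mul_le_mul_of_nonneg_right hη2T (le_of_lt hM0)
                _ = Mr := by ring
            linarith
          have h2η : 2 * η * (1 - ρ * N t) ≤ 2 := by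
            nlinarith [mul_nonneg (le_of_lt hρ0) hNt]
          linarith [htail, hd, hSt, h2η, hterm]
      · -- void step
        have hd := hvoidS t ht htT hcase
        linarith
  -- conclude
  intro t htmem
  obtain ⟨ht1, ht2⟩ := Finset.mem_Icc.mp htmem
  have habs : (∑ i, |lam t i|) = N t := by
    rw [hNdef']
    apply Finset.sum_congr rfl
    intro i _
    exact abs_of_nonneg (hnn t ht1 ht2 i)
  rw [habs]
  have hK := key t ht1 ht2
  have hSt : S t ≤ 1 / ρ ^ 2 + Mr + 2 := by
    have h0 : 0 ≤ ((T + 1 - t : ℕ) : ℝ) * (η ^ 2 * Mr) := by positivity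
    linarith
  have hCS : (N t) ^ 2 ≤ Mr * S t := by
    have hcs := sq_sum_le_card_mul_sum_sq (s := Finset.univ) (f := lam t)
    simp only [Finset.card_univ, Fintype.card_fin] at hcs
    rw [hNdef', hSdef', hMr']
    calc (∑ i, lam t i) ^ 2 ≤ ((m + n : ℕ) : ℝ) * ∑ i, (lam t i) ^ 2 := hcs
      _ = ((m : ℝ) + n) * ∑ i, (lam t i) ^ 2 := by push_cast; ring
  have hNt : 0 ≤ N t := hNnn t ht1 ht2
  have hgoal : N t * ρ ≤ 14 * Mr := by
    have hρsq : ρ ^ 2 ≤ 1 := by nlinarith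
    have h1 : (N t * ρ) ^ 2 ≤ Mr * (1 + (Mr + 2) * ρ ^ 2) := by
      have h2 : (N t) ^ 2 * ρ ^ 2 ≤ Mr * S t * ρ ^ 2 :=
        mul_le_mul_of_nonneg_right hCS (sq_nonneg ρ)
      have h3 : Mr * S t * ρ ^ 2 ≤ Mr * ((1 / ρ ^ 2 + Mr + 2) * ρ ^ 2) := by
        have h4 : S t * ρ ^ 2 ≤ (1 / ρ ^ 2 + Mr + 2) * ρ ^ 2 :=
          mul_le_mul_of_nonneg_right hSt (sq_nonneg ρ)
        nlinarith
      have h5 : (1 / ρ ^ 2 + Mr + 2) * ρ ^ 2 = 1 + (Mr + 2) * ρ ^ 2 := by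
        field_simp
        ring
      calc (N t * ρ) ^ 2 = (N t) ^ 2 * ρ ^ 2 := by ring
        _ ≤ Mr * S t * ρ ^ 2 := h2
        _ ≤ Mr * ((1 / ρ ^ 2 + Mr + 2) * ρ ^ 2) := h3
        _ = Mr * (1 + (Mr + 2) * ρ ^ 2) := by rw [h5]
    have h9 : (Mr + 2) * ρ ^ 2 ≤ Mr + 2 := by nlinarith
    have h10 : Mr * ((Mr + 2) * ρ ^ 2) ≤ Mr * (Mr + 2) :=
      mul_le_mul_of_nonneg_left h9 (le_of_lt hM0)
    have h11 : Mr * 2 ≤ Mr * Mr := mul_le_mul_of_nonneg_left hM2 (le_of_lt hM0)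
    have h6 : (N t * ρ) ^ 2 ≤ (14 * Mr) ^ 2 := by nlinarith [h1, h10, h11, hM0, hM2]
    exact le_of_pow_le_pow_left₀ two_ne_zero (by linarith : (0:ℝ) ≤ 14 * Mr) h6
  rw [le_div_iff₀ hρ0]
  exact hgoal
end

section
/- Let M ≥ 1 and T ≥ 1 be integers, ρ ∈ (0,1], δ ∈ (0,1), and let η = 1/(60·M·√(2·T·ln(T²/δ))); assume additionally η ≤ 1/√T and η·M ≤ 1/ρ. Let 𝒳 be a nonempty set, and for each t ∈ {1,…,T} let f_t : 𝒳 → [0,1] and g̃_t : 𝒳 → [-1,1]^M. Let λ_1 = 0 ∈ ℝ^M, let x_1,…,x_T ∈ 𝒳, and define λ_{t+1,i} = max(0, λ_{t,i} + η·g̃_{t,i}(x_t)) for every coordinate i. Assume there is τ ∈ {1,…,T} such that for every t ≤ τ the action x_t maximizes the Lagrangian, i.e., f_t(x_t) − ⟨λ_t, g̃_t(x_t)⟩ ≥ f_t(x) − ⟨λ_t, g̃_t(x)⟩ for all x ∈ 𝒳, while for every t > τ one has g̃_{t,i}(x_t) ≤ 0 for all coordinates i. Suppose moreover there is a sequence y_1,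 …, y_T ∈ 𝒳 such that for every interval 1 ≤ t1 ≤ t2 ≤ τ: ∑_{t=t1}^{t2} ⟨λ_t, g̃_t(y_t)⟩ ≤ −ρ·∑_{t=t1}^{t2} ‖λ_t‖₁ + 2·(14·M/ρ + M·η)·√(2·T·ln(T²/δ)). Then ‖λ_t‖₁ ≤ 14·M/ρ for every t ∈ {1,…,T+1}. -/
open Finset

private lemma sum_telescope_le (T : ℕ) (P Q : ℕ → ℝ) (t1 : ℕ)
    (hstep : ∀ s, t1 ≤ s → s ≤ T → P (s + 1) ≤ P s + Q s) :
    ∀ t2, t1 ≤ t2 → t2 ≤ T → P (t2 + 1) ≤ P t1 + ∑ s ∈ Finset.Icc t1 t2, Q s := by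
  intro t2 h12
  induction t2, h12 using Nat.le_induction with
  | base =>
    intro h
    rw [Finset.Icc_self, Finset.sum_singleton]
    linarith [hstep t1 le_rfl h]
  | succ m hm ih =>
    intro h
    rw [Finset.sum_Icc_succ_top (by omega : t1 ≤ m + 1)]
    have h1 := hstep (m + 1) (by omega) h
    have h2 := ih (by omega)
    linarith

private lemma le_of_sq_le_sq' {a b : ℝ} (ha : 0 ≤ a) (hb : 0 ≤ b)
    (h : a ^ 2 ≤ b ^ 2) : a ≤ b := by
  calc a = Real.sqrt (a ^ 2) := (Real.sqrt_sq ha).symm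
    _ ≤ Real.sqrt (b ^ 2) := Real.sqrt_le_sqrt h
    _ = b := Real.sqrt_sq hb

set_option maxHeartbeats 1000000 in
/-- Boundedness of the Lagrangian multipliers in the stochastic setting:
deterministic core, under the high-probability concentration event for the
strictly feasible policy (Lemma `selfb` in the paper, stochastic case). -/
theorem multipliers_bounded_stochastic_core
    (M T : ℕ) (hM : 1 ≤ M) (hT : 1 ≤ T)
    (ρ δ η : ℝ) (hρ : ρ ∈ Set.Ioc (0 : ℝ) 1) (hδ : δ ∈ Set.Ioo (0 : ℝ) 1)
    (hη : η = 1 / (60 * M * Real.sqrt (2 * T * Real.log (T ^ 2 / δ))))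
    (hη1 : η ≤ 1 / Real.sqrt T) (hη2 : η * M ≤ 1 / ρ)
    {𝒳 : Type*} [Nonempty 𝒳]
    (f : ℕ → 𝒳 → ℝ) (g : ℕ → 𝒳 → Fin M → ℝ)
    (hf : ∀ t ∈ Finset.Icc 1 T, ∀ x, f t x ∈ Set.Icc (0 : ℝ) 1)
    (hg : ∀ t ∈ Finset.Icc 1 T, ∀ x i, g t x i ∈ Set.Icc (-1 : ℝ) 1)
    (lam : ℕ → Fin M → ℝ) (hlam1 : ∀ i, lam 1 i = 0)
    (x : ℕ → 𝒳)
    (hupd : ∀ t ∈ Finset.Icc 1 T, ∀ i,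
      lam (t + 1) i = max 0 (lam t i + η * g t (x t) i))
    (τ : ℕ) (hτ : τ ∈ Finset.Icc 1 T)
    (hgreedy : ∀ t ∈ Finset.Icc 1 τ, ∀ y : 𝒳,
      f t y - ∑ i, lam t i * g t y i ≤ f t (x t) - ∑ i, lam t i * g t (x t) i)
    (hvoid : ∀ t ∈ Finset.Icc 1 T, τ < t → ∀ i, g t (x t) i ≤ 0)
    (y : ℕ → 𝒳)
    (hconc : ∀ t1 ∈ Finset.Icc 1 τ, ∀ t2 ∈ Finset.Icc t1 τ,
      ∑ t ∈ Finset.Icc t1 t2, ∑ i, lam t i * g t (y t) i ≤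
        -ρ * ∑ t ∈ Finset.Icc t1 t2, ∑ i, |lam t i|
          + 2 * (14 * M / ρ + M * η) * Real.sqrt (2 * T * Real.log (T ^ 2 / δ))) :
    ∀ t ∈ Finset.Icc 1 (T + 1), (∑ i, |lam t i|) ≤ 14 * M / ρ := by
  classical
  obtain ⟨hρ0, hρ1⟩ := hρ
  obtain ⟨hδ0, hδ1⟩ := hδ
  set S : ℝ := Real.sqrt (2 * T * Real.log (T ^ 2 / δ)) with hSdef
  have hT1 : (1:ℝ) ≤ T := by exact_mod_cast hT
  have hM1 : (1:ℝ) ≤ M := by exact_mod_cast hM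
  have hM0 : (0:ℝ) < M := by linarith
  have hT0 : (0:ℝ) < T := by linarith
  have hlog : 0 < Real.log ((T:ℝ) ^ 2 / δ) := by
    apply Real.log_pos
    rw [lt_div_iff₀ hδ0]
    nlinarith
  have hS0 : 0 < S := Real.sqrt_pos.mpr (by positivity)
  have hη0 : 0 < η := by
    rw [hη]
    apply div_pos one_pos
    positivity
  have hsqrtT1 : 1 ≤ Real.sqrt T := by
    rw [show (1:ℝ) = Real.sqrt 1 by simp]
    exact Real.sqrt_le_sqrt hT1
  have hη_le1 : η ≤ 1 := le_trans hη1 (by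
    rw [div_le_one (by linarith)]; exact hsqrtT1)
  have hηS : η * S = 1 / (60 * M) := by
    rw [hη]
    field_simp
  have hη2T : η ^ 2 * T ≤ 1 := by
    have h2 : η ^ 2 ≤ (1 / Real.sqrt T) ^ 2 := by
      apply pow_le_pow_left₀ hη0.le hη1
    have h3 : (1 / Real.sqrt T) ^ 2 = 1 / T := by
      rw [div_pow, one_pow, Real.sq_sqrt hT0.le]
    rw [h3] at h2
    calc η ^ 2 * T ≤ (1 / T) * T := by
          apply mul_le_mul_of_nonneg_right h2 hT0.le
      _ = 1 := by field_simp
  set sM : ℝ := Real.sqrt M with hsMdef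
  have hsM0 : 0 ≤ sM := Real.sqrt_nonneg _
  have hsMsq : sM ^ 2 = M := Real.sq_sqrt hM0.le
  have hsM1 : 1 ≤ sM := by nlinarith
  -- nonnegativity of multipliers
  have hpos : ∀ t, 1 ≤ t → t ≤ T + 1 → ∀ i, 0 ≤ lam t i := by
    intro t ht1 ht2 i
    rcases Nat.exists_eq_add_of_le ht1 with ⟨s, rfl⟩
    rcases Nat.eq_zero_or_pos s with rfl | hs
    · simp [hlam1]
    · have hs1 : 1 ≤ s := hs
      have hsT : s ≤ T := by omega
      have : 1 + s = s + 1 := by omega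
      rw [this, hupd s (mem_Icc.mpr ⟨hs1, hsT⟩) i]
      exact le_max_left _ _
  set P : ℕ → ℝ := fun u => ∑ i, (lam u i) ^ 2 with hPdef
  set L : ℕ → ℝ := fun u => ∑ i, |lam u i| with hLdef
  have hLnn : ∀ u, 0 ≤ L u := fun u => Finset.sum_nonneg fun i _ => abs_nonneg _
  have hPL : ∀ u, P u ≤ (L u) ^ 2 := by
    intro u
    have h0 : P u = ∑ i, |lam u i| ^ 2 := by simp [hPdef, sq_abs]
    rw [h0]
    exact Finset.sum_sq_le_sq_sum_of_nonneg fun i _ => abs_nonneg _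
  have hLP : ∀ u, (L u) ^ 2 ≤ M * P u := by
    intro u
    have h := sq_sum_le_card_mul_sum_sq (s := (Finset.univ : Finset (Fin M)))
      (f := fun i => |lam u i|)
    simpa [hPdef, hLdef, sq_abs, Finset.card_univ] using h
  -- per-step drift bound
  have hdrift : ∀ s, 1 ≤ s → s ≤ T →
      P (s + 1) ≤ P s + 2 * η * (∑ i, lam s i * g s (x s) i) + η ^ 2 * M := by
    intro s h1 hsT
    have hmem : s ∈ Finset.Icc 1 T := mem_Icc.mpr ⟨h1, hsT⟩
    have key : ∀ i, (lam (s+1) i) ^ 2 ≤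
        (lam s i) ^ 2 + 2 * η * (lam s i * g s (x s) i) + η ^ 2 := by
      intro i
      rw [hupd s hmem i]
      obtain ⟨hgi1, hgi2⟩ := hg s hmem (x s) i
      have h1' : (max 0 (lam s i + η * g s (x s) i)) ^ 2 ≤
          (lam s i + η * g s (x s) i) ^ 2 := by
        rcases le_total (lam s i + η * g s (x s) i) 0 with h | h
        · rw [max_eq_left h]
          simpa using sq_nonneg (lam s i + η * g s (x s) i)
        · rw [max_eq_right h]
      have hg2 : (g s (x s) i) ^ 2 ≤ 1 := by nlinarith
      have expand : (lam s i + η * g s (x s) i) ^ 2 =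
          (lam s i) ^ 2 + 2 * η * (lam s i * g s (x s) i)
            + η ^ 2 * (g s (x s) i) ^ 2 := by ring
      have hqg : η ^ 2 * (g s (x s) i) ^ 2 ≤ η ^ 2 * 1 :=
        mul_le_mul_of_nonneg_left hg2 (sq_nonneg η)
      linarith only [h1', expand.le, expand.ge, hqg]
    calc P (s+1) = ∑ i, (lam (s+1) i) ^ 2 := rfl
      _ ≤ ∑ i, ((lam s i) ^ 2 + 2 * η * (lam s i * g s (x s) i) + η ^ 2) :=
          Finset.sum_le_sum fun i _ => key i
      _ = P s + 2 * η * (∑ i, lam s i * g s (x s) i) + η ^ 2 * M := by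
          rw [Finset.sum_add_distrib, Finset.sum_add_distrib, ← Finset.mul_sum,
            Finset.sum_const, Finset.card_univ]
          simp only [Fintype.card_fin, nsmul_eq_mul, hPdef]
          ring
  -- after τ the squared norm is nonincreasing
  have hmono : ∀ s, 1 ≤ s → s ≤ T → τ < s → P (s + 1) ≤ P s := by
    intro s h1 hsT hτs
    have hmem : s ∈ Finset.Icc 1 T := mem_Icc.mpr ⟨h1, hsT⟩
    apply Finset.sum_le_sum
    intro i _
    have hg0 := hvoid s hmem hτs i
    have hl0 : 0 ≤ lam s i := hpos s h1 (by omega) i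
    have hle : lam (s + 1) i ≤ lam s i := by
      rw [hupd s hmem i]
      apply max_le hl0
      have : η * g s (x s) i ≤ 0 := mul_nonpos_of_nonneg_of_nonpos hη0.le hg0
      linarith only [this]
    have h0 : 0 ≤ lam (s + 1) i := by
      rw [hupd s hmem i]; exact le_max_left _ _
    exact pow_le_pow_left₀ h0 hle 2
  obtain ⟨hτ1, hτT⟩ := mem_Icc.mp hτ
  -- the main invariant
  have hmain : ∀ t, 1 ≤ t → t ≤ T + 1 → P t ≤ (14 * sM / ρ) ^ 2 := by
    intro t ht1
    induction t, ht1 using Nat.le_induction with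
    | base =>
      intro _
      have h0 : P 1 = 0 := by simp [hPdef, hlam1]
      rw [h0]
      positivity
    | succ n hn ih =>
      intro hn2
      have hnT : n ≤ T := by omega
      rcases le_or_gt n τ with hcase | hcase
      swap
      · exact le_trans (hmono n hn hnT hcase) (ih (by omega))
      by_contra hcon
      push_neg at hcon
      set A : Finset ℕ :=
        (Finset.Icc 1 n).filter (fun s => P s ≤ (7 * sM / ρ) ^ 2) with hAdef
      have hA1 : 1 ∈ A := by
        rw [hAdef, mem_filter]
        refine ⟨mem_Icc.mpr ⟨le_refl 1, hn⟩, ?_⟩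
        have h0 : P 1 = 0 := by simp [hPdef, hlam1]
        rw [h0]; positivity
      have hAne : A.Nonempty := ⟨1, hA1⟩
      obtain ⟨t1, ht1A, ht1max⟩ : ∃ t1 ∈ A, ∀ s ∈ A, s ≤ t1 :=
        ⟨A.max' hAne, A.max'_mem hAne, fun s hs => A.le_max' s hs⟩
      have ht1A' : t1 ∈ Finset.Icc 1 n ∧ P t1 ≤ (7 * sM / ρ) ^ 2 := by
        rw [hAdef] at ht1A
        exact mem_filter.mp ht1A
      obtain ⟨ht1Icc, hPt1⟩ := ht1A'
      obtain ⟨ht11, ht1n⟩ := mem_Icc.mp ht1Icc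
      have hgap : ∀ s, t1 < s → s ≤ n → (7 * sM / ρ) ^ 2 < P s := by
        intro s hs1 hs2
        by_contra hle
        push_neg at hle
        have hsA : s ∈ A := by
          rw [hAdef, mem_filter, mem_Icc]
          exact ⟨⟨by omega, hs2⟩, hle⟩
        have := ht1max s hsA
        omega
      -- telescoped drift inequality
      have htel' : P (n + 1) ≤ P t1 + ∑ s ∈ Finset.Icc t1 n,
          (2 * η * (∑ i, lam s i * g s (x s) i) + η ^ 2 * M) := by
        refine sum_telescope_le T P
          (fun s => 2 * η * (∑ i, lam s i * g s (x s) i) + η ^ 2 * M) t1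
          ?_ n ht1n hnT
        intro s hs1 hsT
        have hds := hdrift s (le_trans ht11 hs1) hsT
        show P (s + 1) ≤ P s + (2 * η * (∑ i, lam s i * g s (x s) i) + η ^ 2 * M)
        linarith only [hds]
      -- greedy comparison with the feasible policy
      have hQR : ∀ s ∈ Finset.Icc t1 n,
          (∑ i, lam s i * g s (x s) i) ≤ (∑ i, lam s i * g s (y s) i) + 1 := by
        intro s hs
        obtain ⟨hs1, hs2⟩ := mem_Icc.mp hs
        have hsτ : s ≤ τ := le_trans hs2 hcase
        have hsT : s ≤ T := le_trans hsτ hτT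
        have hgr := hgreedy s (mem_Icc.mpr ⟨by omega, hsτ⟩) (y s)
        obtain ⟨hf1a, hf1b⟩ := hf s (mem_Icc.mpr ⟨by omega, hsT⟩) (x s)
        obtain ⟨hf2a, hf2b⟩ := hf s (mem_Icc.mpr ⟨by omega, hsT⟩) (y s)
        linarith only [hgr, hf1a, hf1b, hf2a, hf2b]
      -- concentration of the feasible policy
      have hcc := hconc t1 (mem_Icc.mpr ⟨ht11, le_trans ht1n hcase⟩) n
        (mem_Icc.mpr ⟨ht1n, hcase⟩)
      -- lower bound on the ℓ1 mass over the interval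
      set k : ℕ := n - t1 with hkdef
      have hLlow : ∀ s ∈ Finset.Ioc t1 n, 7 * sM / ρ ≤ L s := by
        intro s hs
        obtain ⟨hs1, hs2⟩ := mem_Ioc.mp hs
        have hDP := (hgap s hs1 hs2).le
        have h1 := hPL s
        have h2 := hLnn s
        have h3 : (0:ℝ) ≤ 7 * sM / ρ := by positivity
        exact le_of_sq_le_sq' h3 h2 (le_trans hDP h1)
      have hSL : (k : ℝ) * (7 * sM / ρ) ≤ ∑ s ∈ Finset.Icc t1 n, L s := by
        have hsplit : ∑ s ∈ Finset.Icc t1 n, L s =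
            L t1 + ∑ s ∈ Finset.Ioc t1 n, L s := by
          rw [Finset.Icc_eq_cons_Ioc ht1n, Finset.sum_cons]
        have hcnt := Finset.card_nsmul_le_sum (Finset.Ioc t1 n) L (7 * sM / ρ) hLlow
        rw [Nat.card_Ioc, nsmul_eq_mul] at hcnt
        have hLt1 := hLnn t1
        rw [hsplit, hkdef]
        linarith only [hcnt, hLt1]
      -- split the summed drift bound
      have hsum_split : ∑ s ∈ Finset.Icc t1 n,
          (2 * η * (∑ i, lam s i * g s (x s) i) + η ^ 2 * M) =
          2 * η * (∑ s ∈ Finset.Icc t1 n, ∑ i, lam s i * g s (x s) i) +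
            ((Finset.Icc t1 n).card : ℝ) * (η ^ 2 * M) := by
        rw [Finset.sum_add_distrib, ← Finset.mul_sum, Finset.sum_const, nsmul_eq_mul]
      have hcardIcc : ((Finset.Icc t1 n).card : ℝ) = (k : ℝ) + 1 := by
        rw [Nat.card_Icc, hkdef]
        have h0 : n + 1 - t1 = (n - t1) + 1 := by omega
        rw [h0]
        push_cast
        ring
      have hkT : (k : ℝ) + 1 ≤ (T : ℝ) := by
        have h0 : k + 1 ≤ T := by omega
        exact_mod_cast h0
      have hk0 : (0:ℝ) ≤ (k : ℝ) := Nat.cast_nonneg k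
      set SQ : ℝ := ∑ s ∈ Finset.Icc t1 n, ∑ i, lam s i * g s (x s) i with hSQdef
      set SR : ℝ := ∑ s ∈ Finset.Icc t1 n, ∑ i, lam s i * g s (y s) i with hSRdef
      set SL : ℝ := ∑ s ∈ Finset.Icc t1 n, L s with hSLdef
      have hQRsum : SQ ≤ SR + ((k : ℝ) + 1) := by
        rw [hSQdef, hSRdef]
        calc (∑ s ∈ Finset.Icc t1 n, ∑ i, lam s i * g s (x s) i)
            ≤ ∑ s ∈ Finset.Icc t1 n, ((∑ i, lam s i * g s (y s) i) + 1) :=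
              Finset.sum_le_sum hQR
          _ = (∑ s ∈ Finset.Icc t1 n, ∑ i, lam s i * g s (y s) i) +
              ((Finset.Icc t1 n).card : ℝ) := by
              rw [Finset.sum_add_distrib, Finset.sum_const, nsmul_eq_mul, mul_one]
          _ = _ := by rw [hcardIcc]
      have hcc' : SR ≤ -ρ * SL + 2 * (14 * M / ρ + M * η) * S := hcc
      -- bound on the concentration slack
      have hslack : 2 * η * (2 * (14 * M / ρ + M * η) * S) ≤ 1 / ρ := by
        have heq : 2 * η * (2 * (14 * M / ρ + M * η) * S) =
            (14 * M / ρ + M * η) * 4 * (η * S) := by ring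
        rw [heq, hηS]
        have heq2 : (14 * (M:ℝ) / ρ + M * η) * 4 * (1 / (60 * M)) =
            (14 / ρ + η) / 15 := by
          field_simp
          ring
        rw [heq2]
        have hηρ : η ≤ 1 / ρ := by
          have h0 : (1:ℝ) ≤ 1 / ρ := by
            rw [le_div_iff₀ hρ0]
            linarith only [hρ1]
          linarith only [h0, hη_le1]
        have h1 : (14 / ρ + η) / 15 ≤ (14 / ρ + 1 / ρ) / 15 := by
          linarith only [hηρ]
        have h2 : (14 / ρ + 1 / ρ) / 15 = 1 / ρ := by ring
        linarith only [h1, h2.le]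
      -- assemble the drift chain
      have hP1 : P (n + 1) ≤ P t1 + 2 * η * SQ + ((k : ℝ) + 1) * (η ^ 2 * M) := by
        rw [hsum_split, hcardIcc] at htel'
        linarith only [htel']
      have h2η : (0:ℝ) ≤ 2 * η := by positivity
      have s1 : 2 * η * SQ ≤ 2 * η * (SR + ((k:ℝ) + 1)) :=
        mul_le_mul_of_nonneg_left hQRsum h2η
      have s2 : 2 * η * SR ≤ 2 * η * (-ρ * SL + 2 * (14 * M / ρ + M * η) * S) :=
        mul_le_mul_of_nonneg_left hcc' h2η
      have s4 : 7 * sM * (k:ℝ) ≤ ρ * SL := by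
        have h := mul_le_mul_of_nonneg_left hSL hρ0.le
        calc 7 * sM * (k:ℝ) = ρ * ((k:ℝ) * (7 * sM / ρ)) := by
              field_simp
          _ ≤ ρ * SL := h
      have s6 : 2 * η * (-ρ * SL) ≤ 2 * η * (-(7 * sM * (k:ℝ))) := by
        apply mul_le_mul_of_nonneg_left _ h2η
        linarith only [s4]
      have hstep : 2 * η * SQ ≤ -(14 * (η * sM * (k:ℝ))) +
          2 * η * (2 * (14 * M / ρ + M * η) * S) + 2 * (η * (k:ℝ)) + 2 * η := by
        linarith only [s1, s2, s6]
      have hquad : ((k:ℝ) + 1) * (η ^ 2 * M) ≤ M := by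
        have h1 : ((k:ℝ) + 1) * (η ^ 2 * M) ≤ (T:ℝ) * (η ^ 2 * M) :=
          mul_le_mul_of_nonneg_right hkT (by positivity)
        have h3 : (η ^ 2 * (T:ℝ)) * M ≤ 1 * M :=
          mul_le_mul_of_nonneg_right hη2T hM0.le
        linarith only [h1, h3]
      -- final numeric contradiction
      have hηk : 0 ≤ η * (sM - 1) * (k:ℝ) :=
        mul_nonneg (mul_nonneg hη0.le (by linarith only [hsM1])) hk0
      have hηsMk : 0 ≤ η * sM * (k:ℝ) := by positivity
      have hd1 : -(14 * (η * sM * (k:ℝ))) + 2 * (η * (k:ℝ)) ≤ 0 := by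
        linarith only [hηk, hηsMk]
      have hd2 : 2 * η ≤ 2 := by linarith only [hη_le1]
      have hfin : P (n + 1) ≤ (7 * sM / ρ) ^ 2 + 2 + (M:ℝ) + 1 / ρ := by
        linarith only [hP1, hstep, hslack, hquad, hPt1, hd1, hd2]
      have hcomb : (14 * sM / ρ) ^ 2 < (7 * sM / ρ) ^ 2 + 2 + (M:ℝ) + 1 / ρ := by
        linarith only [hcon, hfin]
      have hρ2 : 0 < ρ ^ 2 := by positivity
      have hρsq : ρ ^ 2 ≤ 1 := by
        have h0 := mul_le_mul_of_nonneg_right hρ1 hρ0.le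
        have h1 : ρ ^ 2 = ρ * ρ := sq ρ
        linarith only [h0, h1.le, h1.ge, hρ1]
      have hmul := mul_lt_mul_of_pos_right hcomb hρ2
      have e1 : (14 * sM / ρ) ^ 2 * ρ ^ 2 = 196 * (M:ℝ) := by
        rw [← hsMsq]
        field_simp
        ring
      have e2 : ((7 * sM / ρ) ^ 2 + 2 + (M:ℝ) + 1 / ρ) * ρ ^ 2 =
          (7 * sM / ρ) ^ 2 * ρ ^ 2 + 2 * ρ ^ 2 + (M:ℝ) * ρ ^ 2 + (1 / ρ) * ρ ^ 2 := by
        ring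
      have e3 : (7 * sM / ρ) ^ 2 * ρ ^ 2 = 49 * (M:ℝ) := by
        rw [← hsMsq]
        field_simp
        ring
      have e4 : (1 / ρ) * ρ ^ 2 = ρ := by
        field_simp
      rw [e1, e2, e3, e4] at hmul
      have hMρsq : (M:ℝ) * ρ ^ 2 ≤ (M:ℝ) * 1 := mul_le_mul_of_nonneg_left hρsq hM0.le
      linarith only [hmul, hMρsq, hρsq, hρ1, hM1]
  -- conclude
  intro t ht
  obtain ⟨ht1, ht2⟩ := mem_Icc.mp ht
  have hPt := hmain t ht1 ht2
  have hL2 := hLP t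
  have hLt := hLnn t
  have hBnn : (0:ℝ) ≤ 14 * M / ρ := by positivity
  have hL2' : (L t) ^ 2 ≤ (14 * M / ρ) ^ 2 := by
    have hexp : (M:ℝ) * (14 * sM / ρ) ^ 2 = (14 * M / ρ) ^ 2 := by
      have h1 : (M:ℝ) * (14 * sM / ρ) ^ 2 = 196 * sM ^ 2 * M / ρ ^ 2 := by ring
      rw [h1, hsMsq]
      ring
    calc (L t) ^ 2 ≤ M * P t := hL2
      _ ≤ M * (14 * sM / ρ) ^ 2 := mul_le_mul_of_nonneg_left hPt hM0.le
      _ = (14 * M / ρ) ^ 2 := hexp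
  exact le_of_sq_le_sq' hLt hBnn hL2'
end

section
/- Let m, n ≥ 1 be integers, M = m + n, T ≥ 1, ρ ∈ (0,1], δ ∈ (0,1), and let η = 1/(60·M·√(2·T·ln(T²/δ))); assume additionally η ≤ 1/√T and η·M ≤ 1/ρ. Let 𝒳 be a nonempty set, and for each t ∈ {1,…,T} let f_t : 𝒳 → [0,1] and g̃_t : 𝒳 → [-1,1]^M. Suppose there exists a sequence x°_1, …, x°_T ∈ 𝒳 with g̃_{t,i}(x°_t) ≤ −ρ for every t and every coordinate i. Let λ_1 = 0 ∈ ℝ^M, let x_1,…,x_T ∈ 𝒳, and define λ_{t+1,i} = max(0, λ_{t,i} + η·g̃_{t,i}(x_t)) for every coordinate i. Assume there is τ ∈ {1,…,T} such that for every t ≤ τ the action x_t maximizes the Lagrangian, i.e., f_t(x_t) − ⟨λ_t, g̃_t(x_t)⟩ ≥ f_t(x) − ⟨λ_t, g̃_t(x)⟩ for all x ∈ 𝒳, while for every t > τ one has g̃_{t,i}(x_t) ≤ 0 for all coordinates i. Then for every coordinate i ∈ {1,…,m}: ∑_{t=1}^{T} g̃_{t,i}(x_t) ≤ 840·(M²/ρ)·√(2·T·ln(T²/δ)).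 -/
open Finset

set_option maxHeartbeats 1000000 in
/-- Cumulative violation bound for the general constraints in the
adversarial setting (Theorem `vt` in the paper). -/
theorem violation_bound_adversarial
    (m n : ℕ) (hm : 1 ≤ m) (hn : 1 ≤ n) (T : ℕ) (hT : 1 ≤ T)
    (ρ δ η : ℝ) (hρ : ρ ∈ Set.Ioc (0 : ℝ) 1) (hδ : δ ∈ Set.Ioo (0 : ℝ) 1)
    (hη : η = 1 / (60 * (m + n) * Real.sqrt (2 * T * Real.log (T ^ 2 / δ))))
    (hη1 : η ≤ 1 / Real.sqrt T) (hη2 : η * (m + n) ≤ 1 / ρ)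
    {𝒳 : Type*} [Nonempty 𝒳]
    (f : ℕ → 𝒳 → ℝ) (g : ℕ → 𝒳 → Fin (m + n) → ℝ)
    (hf : ∀ t ∈ Finset.Icc 1 T, ∀ x, f t x ∈ Set.Icc (0 : ℝ) 1)
    (hg : ∀ t ∈ Finset.Icc 1 T, ∀ x i, g t x i ∈ Set.Icc (-1 : ℝ) 1)
    (x0 : ℕ → 𝒳)
    (hx0 : ∀ t ∈ Finset.Icc 1 T, ∀ i, g t (x0 t) i ≤ -ρ)
    (lam : ℕ → Fin (m + n) → ℝ) (hlam1 : ∀ i, lam 1 i = 0)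
    (x : ℕ → 𝒳)
    (hupd : ∀ t ∈ Finset.Icc 1 T, ∀ i,
      lam (t + 1) i = max 0 (lam t i + η * g t (x t) i))
    (τ : ℕ) (hτ : τ ∈ Finset.Icc 1 T)
    (hgreedy : ∀ t ∈ Finset.Icc 1 τ, ∀ y : 𝒳,
      f t y - ∑ i, lam t i * g t y i ≤ f t (x t) - ∑ i, lam t i * g t (x t) i)
    (hvoid : ∀ t ∈ Finset.Icc 1 T, τ < t → ∀ i, g t (x t) i ≤ 0) :
    ∀ i : Fin (m + n), (i : ℕ) < m →
      ∑ t ∈ Finset.Icc 1 T, g t (x t) i ≤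
        840 * ((m + n : ℝ) ^ 2 / ρ) * Real.sqrt (2 * T * Real.log (T ^ 2 / δ)) := by
  intro i _him
  obtain ⟨hτ1, hτT⟩ := Finset.mem_Icc.mp hτ
  obtain ⟨hρ0, hρ1⟩ := hρ
  obtain ⟨hδ0, hδ1⟩ := hδ
  set S : ℝ := Real.sqrt (2 * T * Real.log (T ^ 2 / δ)) with hSdef
  have hT1 : (1 : ℝ) ≤ (T : ℝ) := by exact_mod_cast hT
  have hM2 : (2 : ℝ) ≤ ((m : ℝ) + n) := by
    have : (2 : ℕ) ≤ m + n := by omega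
    exact_mod_cast this
  have hMpos : (0 : ℝ) < ((m : ℝ) + n) := by linarith
  have hS : 0 < S := by
    apply Real.sqrt_pos.mpr
    have hlog : 0 < Real.log ((T : ℝ) ^ 2 / δ) := by
      apply Real.log_pos
      rw [one_lt_div hδ0]
      nlinarith
    positivity
  have hden : (0 : ℝ) < 60 * ((m : ℝ) + n) * S := by positivity
  have hη0 : 0 < η := by rw [hη]; positivity
  have hprod : η * (60 * ((m : ℝ) + n) * S) = 1 := by
    rw [hη]; field_simp
  have hsT : (1 : ℝ) ≤ Real.sqrt T := by
    rw [show (1:ℝ) = Real.sqrt 1 by simp]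
    exact Real.sqrt_le_sqrt hT1
  have hηle1 : η ≤ 1 := le_trans hη1 (by rw [div_le_one (by linarith)]; exact hsT)
  -- nonnegativity of the multipliers
  have hlam_nonneg : ∀ t, 1 ≤ t → t ≤ T + 1 → ∀ j, 0 ≤ lam t j := by
    intro t ht1 htT j
    obtain ⟨k, rfl⟩ : ∃ k, t = k + 1 := ⟨t - 1, by omega⟩
    rcases Nat.eq_zero_or_pos k with hk | hk
    · subst hk; rw [hlam1]
    · rw [hupd k (Finset.mem_Icc.mpr ⟨hk, by omega⟩) j]
      exact le_max_left _ _
  -- telescoping lower bound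
  have htel : ∀ N, N ≤ T →
      lam 1 i + η * ∑ t ∈ Finset.Icc 1 N, g t (x t) i ≤ lam (N + 1) i := by
    intro N hN
    induction N with
    | zero => simp
    | succ k ih =>
      have ihk := ih (by omega)
      rw [Finset.sum_Icc_succ_top (by omega : 1 ≤ k + 1), mul_add]
      have hup := hupd (k + 1) (Finset.mem_Icc.mpr ⟨by omega, hN⟩) i
      have hstep : lam (k + 1) i + η * g (k + 1) (x (k + 1)) i ≤ lam (k + 1 + 1) i := by
        rw [hup]; exact le_max_right _ _
      linarith
  -- one-step drift of the squared norm
  have hdrift : ∀ t, 1 ≤ t → t ≤ T →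
      ∑ j, (lam (t + 1) j) ^ 2 ≤
        (∑ j, (lam t j) ^ 2) + 2 * η * (∑ j, lam t j * g t (x t) j)
          + η ^ 2 * ((m : ℝ) + n) := by
    intro t ht1 htT
    have hmem : t ∈ Finset.Icc 1 T := Finset.mem_Icc.mpr ⟨ht1, htT⟩
    have h1 : ∀ j, (lam (t + 1) j) ^ 2 ≤
        (lam t j) ^ 2 + 2 * η * (lam t j * g t (x t) j) + η ^ 2 := by
      intro j
      rw [hupd t hmem j]
      have hg2 : (g t (x t) j) ^ 2 ≤ 1 := by
        have h := hg t hmem (x t) j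
        nlinarith [h.1, h.2]
      rcases le_or_gt 0 (lam t j + η * g t (x t) j) with h | h
      · rw [max_eq_right h]; nlinarith [sq_nonneg η]
      · rw [max_eq_left h.le]
        nlinarith [sq_nonneg (lam t j + η * g t (x t) j), sq_nonneg η]
    calc ∑ j, (lam (t + 1) j) ^ 2
        ≤ ∑ j, ((lam t j) ^ 2 + 2 * η * (lam t j * g t (x t) j) + η ^ 2) :=
          Finset.sum_le_sum fun j _ => h1 j
      _ = (∑ j, (lam t j) ^ 2) + 2 * η * (∑ j, lam t j * g t (x t) j)
            + η ^ 2 * ((m : ℝ) + n) := by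
          rw [Finset.sum_add_distrib, Finset.sum_add_distrib, ← Finset.mul_sum,
            Finset.sum_const, Finset.card_univ, Fintype.card_fin, nsmul_eq_mul]
          push_cast
          ring
  -- Lagrangian inequality up to τ
  have hlag : ∀ t, 1 ≤ t → t ≤ τ →
      ∑ j, lam t j * g t (x t) j ≤ 1 - ρ * ∑ j, lam t j := by
    intro t ht1 htτ
    have htT : t ≤ T := le_trans htτ hτT
    have hmem : t ∈ Finset.Icc 1 T := Finset.mem_Icc.mpr ⟨ht1, htT⟩
    have h := hgreedy t (Finset.mem_Icc.mpr ⟨ht1, htτ⟩) (x0 t)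
    have hf0 := hf t hmem (x0 t)
    have hf1 := hf t hmem (x t)
    have hstep : ρ * ∑ j, lam t j ≤ ∑ j, -(lam t j * g t (x0 t) j) := by
      rw [Finset.mul_sum]
      apply Finset.sum_le_sum
      intro j _
      have hgj := hx0 t hmem j
      have hl := hlam_nonneg t ht1 (by omega) j
      have h2 : lam t j * g t (x0 t) j ≤ lam t j * (-ρ) :=
        mul_le_mul_of_nonneg_left hgj hl
      linarith
    have hsum_neg : ∑ j, -(lam t j * g t (x0 t) j) = -∑ j, lam t j * g t (x0 t) j := by
      rw [Finset.sum_neg_distrib]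
    rw [hsum_neg] at hstep
    linarith [hf0.1, hf1.2]
  -- ℓ1 dominates ℓ2 (squared) for nonnegative vectors
  have hQle : ∀ t, 1 ≤ t → t ≤ T + 1 →
      ∑ j, (lam t j) ^ 2 ≤ (∑ j, lam t j) ^ 2 := by
    intro t ht1 htT
    have hnn := hlam_nonneg t ht1 htT
    calc ∑ j, (lam t j) ^ 2 ≤ ∑ j, lam t j * (∑ k, lam t k) := by
          apply Finset.sum_le_sum
          intro j _
          have hle : lam t j ≤ ∑ k, lam t k :=
            Finset.single_le_sum (fun k _ => hnn k) (Finset.mem_univ j)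
          nlinarith [hnn j]
      _ = (∑ j, lam t j) ^ 2 := by rw [← Finset.sum_mul]; ring
  -- the key invariant
  set C : ℝ := (2 + η * ((m : ℝ) + n)) / (2 * ρ) with hCdef
  set B2 : ℝ := C ^ 2 + 2 * η + η ^ 2 * ((m : ℝ) + n) with hB2def
  have hC0 : 0 ≤ C := by
    apply div_nonneg _ (by linarith)
    nlinarith
  have hQbound : ∀ t, 1 ≤ t → t ≤ τ + 1 → ∑ j, (lam t j) ^ 2 ≤ B2 := by
    intro t ht1
    induction t, ht1 using Nat.le_induction with
    | base =>
      intro _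
      have h0 : ∑ j, (lam 1 j) ^ 2 = 0 := by simp [hlam1]
      rw [h0, hB2def]
      nlinarith [sq_nonneg C]
    | succ k hk ih =>
      intro hk1
      have hkτ : k ≤ τ := by omega
      have hkT : k ≤ T := le_trans hkτ hτT
      have ihk := ih (by omega)
      have hd := hdrift k hk hkT
      have hl := hlag k hk hkτ
      have hsnn : 0 ≤ ∑ j, lam k j :=
        Finset.sum_nonneg fun j _ => hlam_nonneg k hk (by omega) j
      rcases le_or_gt (C ^ 2) (∑ j, (lam k j) ^ 2) with hcase | hcase
      · have h2 := hQle k hk (by omega)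
        have hsum : C ≤ ∑ j, lam k j := by nlinarith
        have hρsum : ρ * C ≤ ρ * ∑ j, lam k j :=
          mul_le_mul_of_nonneg_left hsum hρ0.le
        have hCval : 2 * (ρ * C) = 2 + η * ((m : ℝ) + n) := by
          rw [hCdef]; field_simp
        have h5 : ∑ j, lam k j * g k (x k) j ≤ -(η * ((m : ℝ) + n)) / 2 := by
          linarith
        have h6 : 2 * η * (∑ j, lam k j * g k (x k) j) ≤
            2 * η * (-(η * ((m : ℝ) + n)) / 2) :=
          mul_le_mul_of_nonneg_left h5 (by linarith)
        have h7 : 2 * η * (-(η * ((m : ℝ) + n)) / 2) = -(η ^ 2 * ((m : ℝ) + n)) := by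
          ring
        linarith
      · have h8 : ∑ j, lam k j * g k (x k) j ≤ 1 := by nlinarith
        have h9 : 2 * η * (∑ j, lam k j * g k (x k) j) ≤ 2 * η :=
          by nlinarith
        rw [hB2def]
        linarith
  -- multipliers decrease after τ
  have hdec : ∀ t, τ + 1 ≤ t → t ≤ T + 1 → lam t i ≤ lam (τ + 1) i := by
    intro t ht1
    induction t, ht1 using Nat.le_induction with
    | base => intro _; exact le_refl _
    | succ k hk ih =>
      intro hkT
      have hmem : k ∈ Finset.Icc 1 T := Finset.mem_Icc.mpr ⟨by omega, by omega⟩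
      have hgk := hvoid k hmem (by omega) i
      have hl := hlam_nonneg k (by omega) (by omega) i
      have hstep : lam (k + 1) i ≤ lam k i := by
        rw [hupd k hmem i]
        apply max_le hl
        nlinarith
      exact le_trans hstep (ih (by omega))
  -- bound on the final multiplier
  have hηM : η * ((m : ℝ) + n) ≤ (m : ℝ) + n := by nlinarith
  have hMρ : (m : ℝ) + n ≤ ((m : ℝ) + n) / ρ := by
    rw [le_div_iff₀ hρ0]; nlinarith
  have hCle : C ≤ ((m : ℝ) + n) / ρ := by
    rw [hCdef, div_le_div_iff₀ (by linarith) hρ0]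
    nlinarith
  have hu2 : (2 : ℝ) ≤ ((m : ℝ) + n) / ρ := le_trans hM2 hMρ
  have hB2le : B2 ≤ (14 * ((m : ℝ) + n) / ρ) ^ 2 := by
    have hC2 : C ^ 2 ≤ (((m : ℝ) + n) / ρ) ^ 2 := by nlinarith
    have hηsq : η ^ 2 * ((m : ℝ) + n) ≤ (m : ℝ) + n := by nlinarith
    have h14 : (14 * ((m : ℝ) + n) / ρ) ^ 2 = 196 * (((m : ℝ) + n) / ρ) ^ 2 := by
      ring
    have huu : (((m : ℝ) + n) / ρ) * 2 ≤ (((m : ℝ) + n) / ρ) * (((m : ℝ) + n) / ρ) :=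
      mul_le_mul_of_nonneg_left hu2 (by positivity)
    rw [hB2def, h14]
    linarith [hC2, hηsq, hηle1, hMρ, sq_nonneg (((m : ℝ) + n) / ρ), huu]
  have hsq : (lam (τ + 1) i) ^ 2 ≤ B2 := by
    have h1 : (lam (τ + 1) i) ^ 2 ≤ ∑ j, (lam (τ + 1) j) ^ 2 :=
      Finset.single_le_sum (f := fun j => (lam (τ + 1) j) ^ 2)
        (fun j _ => sq_nonneg _) (Finset.mem_univ i)
    exact le_trans h1 (hQbound (τ + 1) (by omega) (le_refl _))
  have hK0 : 0 < 14 * ((m : ℝ) + n) / ρ := by positivity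
  have hlamτ : lam (τ + 1) i ≤ 14 * ((m : ℝ) + n) / ρ := by
    have hnn := hlam_nonneg (τ + 1) (by omega) (by omega) i
    have h2 : (lam (τ + 1) i) ^ 2 ≤ (14 * ((m : ℝ) + n) / ρ) ^ 2 := le_trans hsq hB2le
    have h3 := Real.sqrt_le_sqrt h2
    rwa [Real.sqrt_sq hnn, Real.sqrt_sq hK0.le] at h3
  have hlamT : lam (T + 1) i ≤ 14 * ((m : ℝ) + n) / ρ :=
    le_trans (hdec (T + 1) (by omega) (le_refl _)) hlamτ
  -- finish
  have hηR : η * (840 * (((m : ℝ) + n) ^ 2 / ρ) * S) = 14 * ((m : ℝ) + n) / ρ := by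
    linear_combination (14 * ((m : ℝ) + n) / ρ) * hprod
  have hfin : η * ∑ t ∈ Finset.Icc 1 T, g t (x t) i ≤
      η * (840 * (((m : ℝ) + n) ^ 2 / ρ) * S) := by
    have h1 := htel T (le_refl T)
    rw [hlam1 i, zero_add] at h1
    rw [hηR]
    exact le_trans h1 hlamT
  have := le_of_mul_le_mul_left (by exact hfin) hη0
  exact this
end

section
/- Let M ≥ 1 and T ≥ 1 be integers, ρ > 0, α = ρ/(1 + ρ), and 𝒳 a nonempty set. For each t ∈ {1,…,T} let f_t : 𝒳 → [0,1] and g̃_t : 𝒳 → [-1,1]^M, and suppose there exists a sequence x°_1, …, x°_T ∈ 𝒳 with g̃_{t,i}(x°_t) ≤ −ρ for every t and every coordinate i. Let (z_1, …, z_T) ∈ 𝒳^T be an arbitrary sequence, let λ_t ∈ ℝ^M with λ_t ≥ 0 componentwise, let τ ∈ {1,…,T}, and suppose that for every t ≤ τ the action x_t ∈ 𝒳 satisfies f_t(x_t) − ⟨λ_t, g̃_t(x_t)⟩ ≥ f_t(x) − ⟨λ_t, g̃_t(x)⟩ for all x ∈ 𝒳. Then α·∑_{t=1}^{T} f_t(z_t)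 − ∑_{t=1}^{τ} f_t(x_t) ≤ (T − τ) − ∑_{t=1}^{τ} ⟨λ_t, g̃_t(x_t)⟩. -/
open Finset

/-!
Every round up to the stopping time is bounded through a mixed strategy: playing `z_t` with
probability `α = ρ/(1+ρ)` and the Slater action `x°_t` otherwise keeps every constraint
coordinate at most `α - (1-α)ρ = 0`, so its expected Lagrangian is at least `α f_t(z_t)`
(as `λ_t ≥ 0` and `f_t ≥ 0`), and by greediness at most the Lagrangian of `x_t`. Each of the
`T - τ` rounds after `τ` contributes at most `α f_t(z_t) ≤ 1`.
-/

theorem div_one_add_self_le_one {ρ : ℝ} (hρ : 0 ≤ ρ) : ρ / (1 + ρ) ≤ 1 :=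
  (div_le_one (by linarith)).2 (by linarith)

theorem slater_mixture_nonpos {ρ a b : ℝ} (hρ : 0 < ρ) (ha : a ≤ 1) (hb : b ≤ -ρ) :
    ρ / (1 + ρ) * a + (1 - ρ / (1 + ρ)) * b ≤ 0 := by
  have h1ρ : 0 < 1 + ρ := by linarith
  have hmix : ρ / (1 + ρ) * a + (1 - ρ / (1 + ρ)) * b = (ρ * a + b) / (1 + ρ) := by
    field_simp
    ring
  rw [hmix]
  exact div_nonpos_of_nonpos_of_nonneg (by nlinarith) h1ρ.le

theorem mul_le_lagrangian_of_forall_le {X ι : Type*} [Fintype ι] {ρ : ℝ} (hρ : 0 < ρ)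
    {f : X → ℝ} {g : X → ι → ℝ} {lam : ι → ℝ} (hlam : ∀ i, 0 ≤ lam i) {x z x0 : X}
    (hgreedy : ∀ y, f y - ∑ i, lam i * g y i ≤ f x - ∑ i, lam i * g x i)
    (hgz : ∀ i, g z i ≤ 1) (hgx0 : ∀ i, g x0 i ≤ -ρ) (hfx0 : 0 ≤ f x0) :
    ρ / (1 + ρ) * f z ≤ f x - ∑ i, lam i * g x i := by
  set α := ρ / (1 + ρ)
  have hα0 : 0 ≤ α := by positivity
  have hα1 : α ≤ 1 := div_one_add_self_le_one hρ.le
  have hmix_penalty : ∑ i, lam i * (α * g z i + (1 - α) * g x0 i) ≤ 0 :=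
    sum_nonpos fun i _ =>
      mul_nonpos_of_nonneg_of_nonpos (hlam i) (slater_mixture_nonpos hρ (hgz i) (hgx0 i))
  have hmix_penalty_eq : ∑ i, lam i * (α * g z i + (1 - α) * g x0 i)
      = α * ∑ i, lam i * g z i + (1 - α) * ∑ i, lam i * g x0 i := by
    simp only [mul_sum, ← sum_add_distrib]
    exact sum_congr rfl fun i _ => by ring
  have hmix_reward : 0 ≤ (1 - α) * f x0 := mul_nonneg (sub_nonneg.2 hα1) hfx0
  linarith [mul_le_mul_of_nonneg_left (hgreedy z) hα0,
    mul_le_mul_of_nonneg_left (hgreedy x0) (sub_nonneg.2 hα1)]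

theorem sum_Icc_one_eq_sum_Icc_one_add_sum_Ioc {M : Type*} [AddCommMonoid M] (u : ℕ → M)
    {τ T : ℕ} (h : τ ≤ T) :
    ∑ t ∈ Icc 1 T, u t = ∑ t ∈ Icc 1 τ, u t + ∑ t ∈ Ioc τ T, u t := by
  have hIcc : ∀ n, Icc 1 n = Ioc 0 n := Icc_add_one_left_eq_Ioc 0
  rw [hIcc, hIcc, sum_Ioc_consecutive u τ.zero_le h]

theorem sum_Ioc_le_sub_of_le_one {u : ℕ → ℝ} {τ T : ℕ} (h : τ ≤ T)
    (hu : ∀ t ∈ Ioc τ T, u t ≤ 1) :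
    ∑ t ∈ Ioc τ T, u t ≤ (T : ℝ) - τ := by
  calc ∑ t ∈ Ioc τ T, u t ≤ #(Ioc τ T) • (1 : ℝ) := sum_le_card_nsmul _ _ _ hu
    _ = (T : ℝ) - τ := by rw [Nat.card_Ioc, nsmul_one, Nat.cast_sub h]

theorem alpha_regret_decomposition_general
    (M T : ℕ)
    (ρ α : ℝ) (hρ : 0 < ρ) (hα : α = ρ / (1 + ρ))
    {𝒳 : Type*}
    (f : ℕ → 𝒳 → ℝ) (g : ℕ → 𝒳 → Fin M → ℝ)
    (hf : ∀ t ∈ Finset.Icc 1 T, ∀ x, f t x ∈ Set.Icc (0 : ℝ) 1)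
    (hg : ∀ t ∈ Finset.Icc 1 T, ∀ x i, g t x i ∈ Set.Icc (-1 : ℝ) 1)
    (x0 : ℕ → 𝒳)
    (hx0 : ∀ t ∈ Finset.Icc 1 T, ∀ i, g t (x0 t) i ≤ -ρ)
    (z : ℕ → 𝒳)
    (lam : ℕ → Fin M → ℝ) (hlam : ∀ t, ∀ i, 0 ≤ lam t i)
    (τ : ℕ) (hτ : τ ∈ Finset.Icc 1 T)
    (x : ℕ → 𝒳)
    (hgreedy : ∀ t ∈ Finset.Icc 1 τ, ∀ y : 𝒳,
      f t y - ∑ i, lam t i * g t y i ≤ f t (x t) - ∑ i, lam t i * g t (x t) i) :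
    α * ∑ t ∈ Finset.Icc 1 T, f t (z t) - ∑ t ∈ Finset.Icc 1 τ, f t (x t) ≤
      ((T : ℝ) - τ) - ∑ t ∈ Finset.Icc 1 τ, ∑ i, lam t i * g t (x t) i := by
  have hτT : τ ≤ T := (mem_Icc.mp hτ).2
  have hα1 : α ≤ 1 := hα ▸ div_one_add_self_le_one hρ.le
  have hhead : ∑ t ∈ Icc 1 τ, α * f t (z t)
      ≤ ∑ t ∈ Icc 1 τ, (f t (x t) - ∑ i, lam t i * g t (x t) i) := by
    refine sum_le_sum fun t ht => ?_
    have htT : t ∈ Icc 1 T := Icc_subset_Icc_right hτT ht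
    exact hα ▸ mul_le_lagrangian_of_forall_le hρ (hlam t) (hgreedy t ht)
      (fun i => (hg t htT (z t) i).2) (hx0 t htT) (hf t htT (x0 t)).1
  have htail : ∑ t ∈ Ioc τ T, α * f t (z t) ≤ (T : ℝ) - τ := by
    refine sum_Ioc_le_sub_of_le_one hτT fun t ht => ?_
    have htT : t ∈ Icc 1 T := by
      simp only [mem_Ioc, mem_Icc] at ht ⊢
      omega
    exact mul_le_one₀ hα1 (hf t htT (z t)).1 (hf t htT (z t)).2
  rw [mul_sum, sum_Icc_one_eq_sum_Icc_one_add_sum_Ioc _ hτT]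
  rw [sum_sub_distrib] at hhead
  linarith

/-- α-regret decomposition in the adversarial setting
(Inequalities (exp)–(optA) in the proof of Theorem `adv_reg`). -/
theorem alpha_regret_decomposition
    (M T : ℕ) (hM : 1 ≤ M) (hT : 1 ≤ T)
    (ρ α : ℝ) (hρ : 0 < ρ) (hα : α = ρ / (1 + ρ))
    {𝒳 : Type*} [Nonempty 𝒳]
    (f : ℕ → 𝒳 → ℝ) (g : ℕ → 𝒳 → Fin M → ℝ)
    (hf : ∀ t ∈ Finset.Icc 1 T, ∀ x, f t x ∈ Set.Icc (0 : ℝ) 1)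
    (hg : ∀ t ∈ Finset.Icc 1 T, ∀ x i, g t x i ∈ Set.Icc (-1 : ℝ) 1)
    (x0 : ℕ → 𝒳)
    (hx0 : ∀ t ∈ Finset.Icc 1 T, ∀ i, g t (x0 t) i ≤ -ρ)
    (z : ℕ → 𝒳)
    (lam : ℕ → Fin M → ℝ) (hlam : ∀ t, ∀ i, 0 ≤ lam t i)
    (τ : ℕ) (hτ : τ ∈ Finset.Icc 1 T)
    (x : ℕ → 𝒳)
    (hgreedy : ∀ t ∈ Finset.Icc 1 τ, ∀ y : 𝒳,
      f t y - ∑ i, lam t i * g t y i ≤ f t (x t) - ∑ i, lam t i * g t (x t) i) :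
    α * ∑ t ∈ Finset.Icc 1 T, f t (z t) - ∑ t ∈ Finset.Icc 1 τ, f t (x t) ≤
      ((T : ℝ) - τ) - ∑ t ∈ Finset.Icc 1 τ, ∑ i, lam t i * g t (x t) i :=
  alpha_regret_decomposition_general M T ρ α hρ hα f g hf hg x0 hx0 z lam hlam τ hτ x hgreedy
end

section
/- Let m, n ≥ 1 be integers, M = m + n, T ≥ 1, δ ∈ (0,1), β ∈ (0,1]^n with β_j·T ≥ 1 for every j and β_min = min_j β_j, and η = 1/(60·M·√(2·T·ln(T²/δ))). Let 𝒳 be a nonempty set containing a distinguished element ∅. For each t ∈ {1,…,T} let f_t : 𝒳 → [0,1], g_t : 𝒳 → [-1,1]^m, h_t : 𝒳 → [0,1]^n with f_t(∅) = 0, g_t(∅) = 0, h_t(∅) = 0, and let g̃_t : 𝒳 → ℝ^M be the unified constraint function whose first m coordinates are g_t and whose coordinate m+j equals h_{t,j} − β_j. Let ρ ∈ (0,1] and suppose there is a sequence x°_1, …, x°_T ∈ 𝒳 with g̃_{t,i}(x°_t) ≤ −ρ for every t and every coordinate i. Define the algorithm: λ_1 = 0 ∈ ℝ^M; at each round t,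 let x̂_t maximize f_t(x) − ⟨λ_t, g̃_t(x)⟩ over x ∈ 𝒳; set x_t = x̂_t if ∑_{s=1}^{t−1} h_{s,j}(x_s) ≤ β_j·T − 1 for every j ∈ {1,…,n}, and x_t = ∅ otherwise; update λ_{t+1,i} = max(0, λ_{t,i} + η·g̃_{t,i}(x_t)) for every coordinate i. Let α = ρ/(1 + ρ). Then for every sequence (z_1, …, z_T) ∈ 𝒳^T satisfying ∑_{t=1}^{T} g_{t,i}(z_t) ≤ 0 for all i ∈ {1,…,m} and ∑_{t=1}^{T} h_{t,j}(z_t) ≤ β_j·T for all j ∈ {1,…,n}, it holds that α·∑_{t=1}^{T} f_t(z_t) − ∑_{t=1}^{T} f_t(x_t) ≤ 1/β_min + (60·M·√(2·T·ln(T²/δ)))/(2·β_min²) + √T/(120·√(2·ln(T²/δ))). -/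
/-!
On a round where the algorithm plays `x̂_t`, the duals are nonnegative, so the Lagrangian maximum
is at least `ρ ‖λ_t‖₁` (compare with the Slater point) and at least `f_t(z_t) - ‖λ_t‖₁` (compare
with `z_t`, as `g̃ ≤ 1`); hence `(1 + ρ)` times it is at least `ρ f_t(z_t)`. Let `K` be the last
round before some budget `j` is nearly exhausted, or `T`. Summing over the first `K` rounds leaves
`-∑ ⟨λ_t, g̃_t(x_t)⟩`, which the regret bound of projected gradient ascent on the duals controls:
against the comparator `0` if `K = T`, and otherwise against `e_{m+j} / β_j`, for which the
overconsumption of resource `j` pays for the `T - K` rounds lost after stopping.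
-/

open Finset

theorem div_one_add_mul_le_max_lagrangian {ι 𝒳 : Type*} [Fintype ι] {F : 𝒳 → ℝ}
    {G : 𝒳 → ι → ℝ} {lam : ι → ℝ} (hlam : ∀ i, 0 ≤ lam i) {ρ : ℝ} (hρ : 0 < ρ)
    {xs z xhat : 𝒳} (hxs : ∀ i, G xs i ≤ -ρ) (hFxs : 0 ≤ F xs) (hz : ∀ i, G z i ≤ 1)
    (hmax : ∀ y, F y - ∑ i, lam i * G y i ≤ F xhat - ∑ i, lam i * G xhat i) :
    ρ / (1 + ρ) * F z ≤ F xhat - ∑ i, lam i * G xhat i := by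
  have hslater : ρ * ∑ i, lam i ≤ F xhat - ∑ i, lam i * G xhat i := by
    have : ∑ i, lam i * G xs i ≤ -(ρ * ∑ i, lam i) := by
      rw [mul_sum, ← sum_neg_distrib]
      exact sum_le_sum fun i _ => by nlinarith [hxs i, hlam i]
    linarith [hmax xs]
  have hcomparator : F z - ∑ i, lam i ≤ F xhat - ∑ i, lam i * G xhat i := by
    have : ∑ i, lam i * G z i ≤ ∑ i, lam i :=
      sum_le_sum fun i _ => mul_le_of_le_one_right (hlam i) (hz i)
    linarith [hmax z]
  -- adding the first bound to ρ times the second eliminates `∑ i, lam i`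
  rw [div_mul_eq_mul_div, div_le_iff₀ (by linarith)]
  nlinarith

lemma sq_max_zero_sub_le {ℓ : ℝ} (hℓ : 0 ≤ ℓ) (v : ℝ) : (max 0 v - ℓ) ^ 2 ≤ (v - ℓ) ^ 2 := by
  rcases le_total 0 v with hv | hv
  · rw [max_eq_right hv]
  · rw [max_eq_left hv]; nlinarith

theorem sum_sub_inner_le_of_projected_ascent {ι : Type*} [Fintype ι] {η : ℝ} (hη : 0 < η)
    {lam G : ℕ → ι → ℝ} {S : ℕ} (hlam1 : ∀ i, lam 1 i = 0)
    (hupd : ∀ t ∈ Icc 1 S, ∀ i, lam (t + 1) i = max 0 (lam t i + η * G t i))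
    (hG : ∀ t ∈ Icc 1 S, ∀ i, |G t i| ≤ 1) {ℓ : ι → ℝ} (hℓ : ∀ i, 0 ≤ ℓ i) :
    ∑ t ∈ Icc 1 S, ∑ i, (ℓ i - lam t i) * G t i ≤
      (∑ i, ℓ i ^ 2) / (2 * η) + η * Fintype.card ι * S / 2 := by
  set Φ : ℕ → ℝ := fun t => ∑ i, (lam t i - ℓ i) ^ 2
  have hstep : ∀ t ∈ Icc 1 S, Φ (t + 1) - Φ t ≤
      η ^ 2 * Fintype.card ι - 2 * η * ∑ i, (ℓ i - lam t i) * G t i := by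
    intro t ht
    have hcoord : ∀ i, (lam (t + 1) i - ℓ i) ^ 2 - (lam t i - ℓ i) ^ 2 ≤
        η ^ 2 - 2 * η * ((ℓ i - lam t i) * G t i) := by
      intro i
      have hproj := sq_max_zero_sub_le (hℓ i) (lam t i + η * G t i)
      have hG2 : G t i ^ 2 ≤ 1 := (sq_le_one_iff_abs_le_one _).2 (hG t ht i)
      rw [hupd t ht i]
      nlinarith
    calc Φ (t + 1) - Φ t = ∑ i, ((lam (t + 1) i - ℓ i) ^ 2 - (lam t i - ℓ i) ^ 2) :=
          (sum_sub_distrib ..).symm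
      _ ≤ ∑ i, (η ^ 2 - 2 * η * ((ℓ i - lam t i) * G t i)) := sum_le_sum fun i _ => hcoord i
      _ = _ := by rw [sum_sub_distrib, ← mul_sum]; simp [mul_comm]
  have htelescope : ∑ t ∈ Icc 1 S, (Φ (t + 1) - Φ t) = Φ (S + 1) - Φ 1 := by
    rw [← Ico_add_one_right_eq_Icc, sum_Ico_sub Φ (by omega)]
  have hΦ1 : Φ 1 = ∑ i, ℓ i ^ 2 := by simp [Φ, hlam1]
  have hΦnonneg : 0 ≤ Φ (S + 1) := sum_nonneg fun i _ => sq_nonneg _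
  have hsum := sum_le_sum hstep
  rw [htelescope, hΦ1, sum_sub_distrib, sum_const, Nat.card_Icc, nsmul_eq_mul, ← mul_sum] at hsum
  rw [div_add_div _ _ (by positivity) two_ne_zero, le_div_iff₀ (by positivity)]
  push_cast at hsum
  nlinarith

lemma projected_ascent_nonneg {ι : Type*} {η : ℝ} {lam G : ℕ → ι → ℝ} {T : ℕ}
    (hlam1 : ∀ i, lam 1 i = 0)
    (hupd : ∀ t ∈ Icc 1 T, ∀ i, lam (t + 1) i = max 0 (lam t i + η * G t i)) :
    ∀ t ∈ Icc 1 (T + 1), ∀ i, 0 ≤ lam t i := by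
  intro t ht i
  obtain ⟨ht1, htT⟩ := mem_Icc.mp ht
  obtain rfl | hlt := ht1.eq_or_lt
  · exact (hlam1 i).ge
  obtain ⟨s, rfl⟩ := Nat.exists_eq_add_of_lt hlt
  rw [hupd (1 + s) (mem_Icc.mpr ⟨by omega, by omega⟩) i]
  exact le_max_left _ _

theorem neg_sum_inner_add_le_of_stop {ι : Type*} [Fintype ι] {η : ℝ} (hη : 0 < η)
    {lam G : ℕ → ι → ℝ} {K T : ℕ} (hKT : K ≤ T) (hlam1 : ∀ i, lam 1 i = 0)
    (hupd : ∀ t ∈ Icc 1 K, ∀ i, lam (t + 1) i = max 0 (lam t i + η * G t i))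
    (hG : ∀ t ∈ Icc 1 K, ∀ i, |G t i| ≤ 1) {bmin : ℝ} (hbmin : 0 < bmin)
    (hstop : K = T ∨ ∃ c b, bmin ≤ b ∧ b * T - 1 < ∑ t ∈ Icc 1 K, (G t c + b)) :
    -∑ t ∈ Icc 1 K, ∑ i, lam t i * G t i + (T - K) ≤
      1 / bmin + 1 / (2 * η * bmin ^ 2) + η * Fintype.card ι * T / 2 := by
  classical
  have hregret : ∀ ℓ : ι → ℝ, (∀ i, 0 ≤ ℓ i) →
      ∑ t ∈ Icc 1 K, ∑ i, ℓ i * G t i - ∑ t ∈ Icc 1 K, ∑ i, lam t i * G t i ≤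
        (∑ i, ℓ i ^ 2) / (2 * η) + η * Fintype.card ι * K / 2 := fun ℓ hℓ => by
    simpa only [sub_mul, sum_sub_distrib] using
      sum_sub_inner_le_of_projected_ascent hη hlam1 hupd hG hℓ
  have hKT' : (K : ℝ) ≤ T := Nat.cast_le.mpr hKT
  have hhorizon : η * Fintype.card ι * K / 2 ≤ η * Fintype.card ι * T / 2 := by gcongr
  have hpos : 0 < 1 / bmin + 1 / (2 * η * bmin ^ 2) := by positivity
  rcases hstop with rfl | ⟨c, b, hb, hover⟩
  · have := hregret 0 fun _ => le_rfl
    simp only [Pi.zero_apply, zero_mul, sum_const_zero, zero_sub, zero_pow two_ne_zero, zero_div,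
      zero_add] at this
    linarith
  -- the dual comparator putting weight `1 / b` on the overconsumed resource
  have hb0 : 0 < b := hbmin.trans_le hb
  set ℓ : ι → ℝ := Pi.single c (1 / b)
  have := hregret ℓ fun i => by
    simp only [ℓ, Pi.single_apply]; split_ifs <;> positivity
  have hsq : ∑ i, ℓ i ^ 2 = 1 / b ^ 2 := by
    simp [ℓ, Pi.single_apply, ite_pow]
  have hinner : ∀ t, ∑ i, ℓ i * G t i = G t c / b := by
    simp [ℓ, Pi.single_apply, ite_mul, div_eq_inv_mul]
  rw [hsq] at this
  simp only [hinner, ← sum_div] at this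
  rw [sum_add_distrib, sum_const, Nat.card_Icc, nsmul_eq_mul, add_tsub_cancel_right] at hover
  have hover' : T - 1 / b - K < (∑ t ∈ Icc 1 K, G t c) / b := by
    rw [lt_div_iff₀ hb0]; field_simp; linarith
  have h1 : 1 / b ≤ 1 / bmin := one_div_le_one_div_of_le hbmin hb
  have h2 : 1 / b ^ 2 / (2 * η) ≤ 1 / (2 * η * bmin ^ 2) := by
    rw [div_div, mul_comm]; gcongr
  linarith

lemma exists_le_forall_lt_not_and_eq_or (Q : ℕ → Prop) (T : ℕ) :
    ∃ K ≤ T, (∀ k < K, ¬ Q k) ∧ (K = T ∨ Q K) := by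
  classical
  have hex : ∃ k, k = T ∨ Q k := ⟨T, Or.inl rfl⟩
  refine ⟨Nat.find hex, Nat.find_min' hex (Or.inl rfl), fun k hk hQ => ?_, Nat.find_spec hex⟩
  exact Nat.find_min hex hk (Or.inr hQ)

lemma sum_sub_sum_le_of_prefix {a b d : ℕ → ℝ} {K T : ℕ} (hKT : K ≤ T)
    (hprefix : ∀ t ∈ Icc 1 K, a t ≤ b t - d t) (ha : ∀ t ∈ Icc 1 T, a t ≤ 1)
    (hb : ∀ t ∈ Icc 1 T, 0 ≤ b t) :
    ∑ t ∈ Icc 1 T, a t - ∑ t ∈ Icc 1 T, b t ≤ -∑ t ∈ Icc 1 K, d t + (T - K) := by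
  have hsplit : ∀ u : ℕ → ℝ, ∑ t ∈ Icc 1 T, u t = ∑ t ∈ Icc 1 K, u t + ∑ t ∈ Ioc K T, u t := by
    intro u
    have hIcc : ∀ n, Icc 1 n = Ioc 0 n := Icc_add_one_left_eq_Ioc 0
    rw [hIcc, hIcc, sum_Ioc_consecutive u (Nat.zero_le K) hKT]
  have hsub : Ioc K T ⊆ Icc 1 T := fun t ht => by simp only [mem_Ioc, mem_Icc] at ht ⊢; omega
  have hhead : ∑ t ∈ Icc 1 K, a t ≤ ∑ t ∈ Icc 1 K, b t - ∑ t ∈ Icc 1 K, d t := by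
    rw [← sum_sub_distrib]; exact sum_le_sum hprefix
  have htail_a : ∑ t ∈ Ioc K T, a t ≤ T - K := by
    calc ∑ t ∈ Ioc K T, a t ≤ ∑ t ∈ Ioc K T, (1 : ℝ) := sum_le_sum fun t ht => ha t (hsub ht)
      _ = T - K := by simp [Nat.cast_sub hKT]
  have htail_b : 0 ≤ ∑ t ∈ Ioc K T, b t := sum_nonneg fun t ht => hb t (hsub ht)
  rw [hsplit a, hsplit b]
  linarith

lemma abs_le_one_of_castAdd_natAdd {m n : ℕ} {v : Fin (m + n) → ℝ} {a : Fin m → ℝ}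
    {b c : Fin n → ℝ} (hva : ∀ i, v (Fin.castAdd n i) = a i)
    (hvbc : ∀ j, v (Fin.natAdd m j) = b j - c j) (ha : ∀ i, a i ∈ Set.Icc (-1) 1)
    (hb : ∀ j, b j ∈ Set.Icc 0 1) (hc : ∀ j, c j ∈ Set.Icc 0 1) (i : Fin (m + n)) :
    |v i| ≤ 1 := by
  refine Fin.addCases (fun i => ?_) (fun j => ?_) i
  · rw [hva, abs_le]; exact ha i
  · rw [hvbc, abs_le]
    constructor <;> linarith [(hb j).1, (hb j).2, (hc j).1, (hc j).2]

lemma dgd_bound_eq {M T L η : ℝ} (hM : 0 < M) (hT : 0 < T) (hL : 0 < L)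
    (hη : η = 1 / (60 * M * Real.sqrt (2 * T * L))) (b : ℝ) :
    1 / b + 1 / (2 * η * b ^ 2) + η * M * T / 2 =
      1 / b + 60 * M * Real.sqrt (2 * T * L) / (2 * b ^ 2)
        + Real.sqrt T / (120 * Real.sqrt (2 * L)) := by
  have hsplit : Real.sqrt (2 * T * L) = Real.sqrt T * Real.sqrt (2 * L) := by
    rw [mul_comm 2 T, mul_assoc, Real.sqrt_mul hT.le]
  have hTsq : Real.sqrt T * Real.sqrt T = T := Real.mul_self_sqrt hT.le
  have : 0 < Real.sqrt T := Real.sqrt_pos.mpr hT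
  have : 0 < Real.sqrt (2 * L) := Real.sqrt_pos.mpr (by linarith)
  have hsecond : 1 / (2 * η * b ^ 2) = 60 * M * Real.sqrt (2 * T * L) / (2 * b ^ 2) := by
    rw [hη]; field_simp
  have hthird : η * M * T / 2 = Real.sqrt T / (120 * Real.sqrt (2 * L)) := by
    rw [hη, hsplit]; field_simp
    linear_combination -120 * hTsq
  rw [hsecond, hthird]

theorem adversarial_alpha_regret_general
    (m n T : ℕ) (hT : 1 ≤ T)
    (δ : ℝ) (hδ : δ ∈ Set.Ioo (0 : ℝ) 1)
    (β : Fin n → ℝ) (hβ : ∀ j, β j ∈ Set.Ioc (0 : ℝ) 1)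
    (βmin : ℝ) (hβmin : IsLeast (Set.range β) βmin)
    (η : ℝ) (hη : η = 1 / (60 * (m + n) * Real.sqrt (2 * T * Real.log (T ^ 2 / δ))))
    {𝒳 : Type*}
    (f : ℕ → 𝒳 → ℝ) (g : ℕ → 𝒳 → Fin m → ℝ) (h : ℕ → 𝒳 → Fin n → ℝ)
    (hf : ∀ t ∈ Finset.Icc 1 T, ∀ x, f t x ∈ Set.Icc (0 : ℝ) 1)
    (hgr : ∀ t ∈ Finset.Icc 1 T, ∀ x i, g t x i ∈ Set.Icc (-1 : ℝ) 1)
    (hhr : ∀ t ∈ Finset.Icc 1 T, ∀ x j, h t x j ∈ Set.Icc (0 : ℝ) 1)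
    -- the unified constraint function
    (gt : ℕ → 𝒳 → Fin (m + n) → ℝ)
    (hgt1 : ∀ t x (i : Fin m), gt t x (Fin.castAdd n i) = g t x i)
    (hgt2 : ∀ t x (j : Fin n), gt t x (Fin.natAdd m j) = h t x j - β j)
    -- the adversarial Slater condition
    (ρ : ℝ) (hρ : ρ ∈ Set.Ioc (0 : ℝ) 1)
    (x0 : ℕ → 𝒳)
    (hx0 : ∀ t ∈ Finset.Icc 1 T, ∀ i, gt t (x0 t) i ≤ -ρ)
    -- the Dual Gradient Descent algorithm
    (lam : ℕ → Fin (m + n) → ℝ) (hlam1 : ∀ i, lam 1 i = 0)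
    (xhat x : ℕ → 𝒳)
    (hxhat : ∀ t ∈ Finset.Icc 1 T, ∀ y : 𝒳,
      f t y - ∑ i, lam t i * gt t y i ≤
        f t (xhat t) - ∑ i, lam t i * gt t (xhat t) i)
    (hplay : ∀ t ∈ Finset.Icc 1 T,
      (∀ j, ∑ s ∈ Finset.Icc 1 (t - 1), h s (x s) j ≤ β j * T - 1) →
        x t = xhat t)
    (hupd : ∀ t ∈ Finset.Icc 1 T, ∀ i,
      lam (t + 1) i = max 0 (lam t i + η * gt t (x t) i))
    (α : ℝ) (hα : α = ρ / (1 + ρ))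
    -- any feasible comparator sequence
    (z : ℕ → 𝒳) :
    α * ∑ t ∈ Finset.Icc 1 T, f t (z t) - ∑ t ∈ Finset.Icc 1 T, f t (x t) ≤
      1 / βmin + (60 * (m + n) * Real.sqrt (2 * T * Real.log (T ^ 2 / δ))) / (2 * βmin ^ 2)
        + Real.sqrt T / (120 * Real.sqrt (2 * Real.log (T ^ 2 / δ))) := by
  obtain ⟨hδ0, hδ1⟩ := hδ
  obtain ⟨⟨j₀, rfl⟩, hβmin_le⟩ := hβmin
  have hT0 : (0 : ℝ) < T := by exact_mod_cast hT
  have hM : (0 : ℝ) < m + n := by have := j₀.pos; positivity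
  have hlog : 0 < Real.log (T ^ 2 / δ) :=
    Real.log_pos ((one_lt_div hδ0).mpr (by nlinarith [(Nat.one_le_cast.mpr hT : (1 : ℝ) ≤ T)]))
  have hη0 : 0 < η := by rw [hη]; positivity
  have hG : ∀ t ∈ Icc 1 T, ∀ y i, |gt t y i| ≤ 1 := fun t ht y =>
    abs_le_one_of_castAdd_natAdd (hgt1 t y) (hgt2 t y) (hgr t ht y) (hhr t ht y)
      fun j => Set.Ioc_subset_Icc_self (hβ j)
  have hlam := projected_ascent_nonneg hlam1 hupd
  obtain ⟨K, hKT, hplayed, hstop⟩ := exists_le_forall_lt_not_and_eq_or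
    (fun k => ∃ j, β j * T - 1 < ∑ s ∈ Icc 1 k, h s (x s) j) T
  have hround : ∀ t ∈ Icc 1 K, α * f t (z t) ≤ f t (x t) - ∑ i, lam t i * gt t (x t) i := by
    intro t ht
    have htT : t ∈ Icc 1 T := Icc_subset_Icc_right hKT ht
    have hxt := hplay t htT (by simpa using hplayed (t - 1) (by grind))
    rw [hα, hxt]
    exact div_one_add_mul_le_max_lagrangian (hlam t (Icc_subset_Icc_right (by omega) htT))
      hρ.1 (hx0 t htT) (hf t htT _).1 (fun i => (abs_le.mp (hG t htT _ i)).2) (hxhat t htT)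
  have hα1 : α ≤ 1 := by rw [hα, div_le_one (by linarith [hρ.1])]; linarith
  have hregret := sum_sub_sum_le_of_prefix (d := fun t => ∑ i, lam t i * gt t (x t) i) hKT hround
    (fun t ht => mul_le_one₀ hα1 (hf t ht _).1 (hf t ht _).2) (fun t ht => (hf t ht _).1)
  have hdual := neg_sum_inner_add_le_of_stop hη0 hKT hlam1
    (fun t ht => hupd t (Icc_subset_Icc_right hKT ht))
    (fun t ht => hG t (Icc_subset_Icc_right hKT ht) (x t)) (hβ j₀).1
    (hstop.imp_right fun ⟨j, hj⟩ =>
      ⟨Fin.natAdd m j, β j, hβmin_le ⟨j, rfl⟩, by simpa [hgt2] using hj⟩)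
  rw [Fintype.card_fin, Nat.cast_add, dgd_bound_eq hM hT0 hlog hη] at hdual
  rw [mul_sum]
  linarith

/-- α-regret bound of Dual Gradient Descent in the adversarial setting
(Theorem `adv_reg` in the paper), against any feasible comparator sequence. -/
theorem adversarial_alpha_regret
    (m n T : ℕ) (hm : 1 ≤ m) (hn : 1 ≤ n) (hT : 1 ≤ T)
    (δ : ℝ) (hδ : δ ∈ Set.Ioo (0 : ℝ) 1)
    (β : Fin n → ℝ) (hβ : ∀ j, β j ∈ Set.Ioc (0 : ℝ) 1) (hβT : ∀ j, 1 ≤ β j * T)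
    (βmin : ℝ) (hβmin : IsLeast (Set.range β) βmin)
    (η : ℝ) (hη : η = 1 / (60 * (m + n) * Real.sqrt (2 * T * Real.log (T ^ 2 / δ))))
    {𝒳 : Type*} [Nonempty 𝒳] (void : 𝒳)
    (f : ℕ → 𝒳 → ℝ) (g : ℕ → 𝒳 → Fin m → ℝ) (h : ℕ → 𝒳 → Fin n → ℝ)
    (hf : ∀ t ∈ Finset.Icc 1 T, ∀ x, f t x ∈ Set.Icc (0 : ℝ) 1)
    (hgr : ∀ t ∈ Finset.Icc 1 T, ∀ x i, g t x i ∈ Set.Icc (-1 : ℝ) 1)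
    (hhr : ∀ t ∈ Finset.Icc 1 T, ∀ x j, h t x j ∈ Set.Icc (0 : ℝ) 1)
    (hvoidf : ∀ t ∈ Finset.Icc 1 T, f t void = 0)
    (hvoidg : ∀ t ∈ Finset.Icc 1 T, ∀ i, g t void i = 0)
    (hvoidh : ∀ t ∈ Finset.Icc 1 T, ∀ j, h t void j = 0)
    -- the unified constraint function
    (gt : ℕ → 𝒳 → Fin (m + n) → ℝ)
    (hgt1 : ∀ t x (i : Fin m), gt t x (Fin.castAdd n i) = g t x i)
    (hgt2 : ∀ t x (j : Fin n), gt t x (Fin.natAdd m j) = h t x j - β j)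
    -- the adversarial Slater condition
    (ρ : ℝ) (hρ : ρ ∈ Set.Ioc (0 : ℝ) 1)
    (x0 : ℕ → 𝒳)
    (hx0 : ∀ t ∈ Finset.Icc 1 T, ∀ i, gt t (x0 t) i ≤ -ρ)
    -- the Dual Gradient Descent algorithm
    (lam : ℕ → Fin (m + n) → ℝ) (hlam1 : ∀ i, lam 1 i = 0)
    (xhat x : ℕ → 𝒳)
    (hxhat : ∀ t ∈ Finset.Icc 1 T, ∀ y : 𝒳,
      f t y - ∑ i, lam t i * gt t y i ≤
        f t (xhat t) - ∑ i, lam t i * gt t (xhat t) i)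
    (hplay : ∀ t ∈ Finset.Icc 1 T,
      (∀ j, ∑ s ∈ Finset.Icc 1 (t - 1), h s (x s) j ≤ β j * T - 1) →
        x t = xhat t)
    (hstopped : ∀ t ∈ Finset.Icc 1 T,
      ¬(∀ j, ∑ s ∈ Finset.Icc 1 (t - 1), h s (x s) j ≤ β j * T - 1) →
        x t = void)
    (hupd : ∀ t ∈ Finset.Icc 1 T, ∀ i,
      lam (t + 1) i = max 0 (lam t i + η * gt t (x t) i))
    (α : ℝ) (hα : α = ρ / (1 + ρ))
    -- any feasible comparator sequence
    (z : ℕ → 𝒳)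
    (hzg : ∀ i, ∑ t ∈ Finset.Icc 1 T, g t (z t) i ≤ 0)
    (hzh : ∀ j, ∑ t ∈ Finset.Icc 1 T, h t (z t) j ≤ β j * T) :
    α * ∑ t ∈ Finset.Icc 1 T, f t (z t) - ∑ t ∈ Finset.Icc 1 T, f t (x t) ≤
      1 / βmin + (60 * (m + n) * Real.sqrt (2 * T * Real.log (T ^ 2 / δ))) / (2 * βmin ^ 2)
        + Real.sqrt T / (120 * Real.sqrt (2 * Real.log (T ^ 2 / δ))) :=
  adversarial_alpha_regret_general m n T hT δ hδ β hβ βmin hβmin η hη f g h hf hgr hhr gt hgt1 hgt2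
    ρ hρ x0 hx0 lam hlam1 xhat x hxhat hplay hupd α hα z
end
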